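/- arXiv:2502.14582 — 10 statements merged into one kernel-verified Lean document; each statement's English description precedes it below -/
import Mathlib

section
/- Let G ≤ Sym(n) be a transitive permutation group, let i, j ∈ {1,…,n} be distinct, and let D = D_{i→j} ∪ D_{j→i}, where D_{i→j} denotes the set of all derangements in G mapping i to j. Then the set G_{j→j} ∪ G_{i→j} (all elements of G fixing j, together with all elements of G mapping i to j) is an independent set of size 2|G|/n in the Cayley graph Cay(G, Der(G) \ D). -/
/-! The set is `{σ | σ⁻¹ j ∈ {i, j}}`. For two of its elements with `σ x = j` and `τ y = j`,
the quotient `σ⁻¹ τ` maps `y` to `x`: it fixes a point if `x = y`, and lies in `D` otherwise.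
Each of `G_{j→j}`, `G_{i→j}` is a coset of a point stabilizer, of size `|G|/n` by
orbit–stabilizer. -/

/-- The Cayley graph of a group `Γ` with (inverse-closed) connection set `C`:
`g` and `h` are adjacent iff they are distinct and `g⁻¹ * h ∈ C` (symmetrized). -/
def cayley (Γ : Type*) [Group Γ] (C : Set Γ) : SimpleGraph Γ where
  Adj g h := g ≠ h ∧ g⁻¹ * h ∈ C ∧ h⁻¹ * g ∈ C
  symm := ⟨fun _ _ ⟨hne, h1, h2⟩ => ⟨hne.symm, h2, h1⟩⟩
  loopless := ⟨fun _ ⟨hne, _⟩ => hne rfl⟩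

/-- A set of vertices of a graph is independent if its elements are pairwise non-adjacent. -/
def IsIndepSet {V : Type*} (X : SimpleGraph V) (s : Set V) : Prop :=
  s.Pairwise fun a b => ¬ X.Adj a b

/-- The independence number of a graph: the maximum size of an independent set. -/
noncomputable def indepNum {V : Type*} (X : SimpleGraph V) : ℕ :=
  sSup {k | ∃ s : Finset V, IsIndepSet X ↑s ∧ s.card = k}

/-- The set of derangements of a permutation group `G ≤ Sym(n)`: the elements of `G`
fixing no point of `{1,…,n}`. -/
def der {n : ℕ} (G : Subgroup (Equiv.Perm (Fin n))) : Set G :=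
  {σ : G | ∀ i : Fin n, (σ : Equiv.Perm (Fin n)) i ≠ i}

open Equiv

lemma isIndepSet_cayley_of_inv_mul_notMem {Γ : Type*} [Group Γ] {C s : Set Γ}
    (h : ∀ σ ∈ s, ∀ τ ∈ s, σ⁻¹ * τ ∉ C) : IsIndepSet (cayley Γ C) s :=
  fun σ hσ τ hτ _ hadj => h σ hσ τ hτ hadj.2.1

namespace MulAction

variable {G X : Type*} [Group G] [MulAction G X]

lemma setOf_smul_eq_eq_image_stabilizer {g₀ : G} {a b : X} (hg₀ : g₀ • a = b) :
    {g : G | g • a = b} = (g₀ * ·) '' (stabilizer G a : Set G) := by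
  ext g
  refine ⟨fun (hg : g • a = b) => ⟨g₀⁻¹ * g, ?_, mul_inv_cancel_left g₀ g⟩, ?_⟩
  · rw [SetLike.mem_coe, mem_stabilizer_iff, mul_smul, hg, ← hg₀, inv_smul_smul]
  · rintro ⟨h, hh, rfl⟩
    show (g₀ * h) • a = b
    rw [mul_smul, mem_stabilizer_iff.mp hh, hg₀]

lemma ncard_setOf_smul_eq_mul_card [IsPretransitive G X] (a b : X) :
    {g : G | g • a = b}.ncard * Nat.card X = Nat.card G := by
  obtain ⟨g₀, hg₀⟩ := exists_smul_eq G a b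
  rw [setOf_smul_eq_eq_image_stabilizer hg₀, Set.ncard_image_of_injective _ (mul_right_injective g₀),
    ← index_stabilizer_of_transitive G a, ← Nat.card_coe_set_eq]
  exact Subgroup.card_mul_index _

end MulAction

section PermGroup

variable {n : ℕ} {G : Subgroup (Perm (Fin n))}

lemma coe_inv_mul_apply_of_apply_eq {σ τ : G} {x y z : Fin n}
    (hσ : (σ : Perm (Fin n)) x = z) (hτ : (τ : Perm (Fin n)) y = z) :
    ((σ⁻¹ * τ : G) : Perm (Fin n)) y = x := by
  simp only [Subgroup.coe_mul, InvMemClass.coe_inv, Perm.mul_apply, hτ, Perm.inv_eq_iff_eq, hσ]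

lemma isPretransitive_of_forall_exists_apply_eq (hG : ∀ a b : Fin n, ∃ σ ∈ G, σ a = b) :
    MulAction.IsPretransitive G (Fin n) :=
  ⟨fun a b => let ⟨σ, hσ, h⟩ := hG a b; ⟨⟨σ, hσ⟩, h⟩⟩

lemma ncard_setOf_apply_eq_mul (hG : ∀ a b : Fin n, ∃ σ ∈ G, σ a = b) (a b : Fin n) :
    {σ : G | (σ : Perm (Fin n)) a = b}.ncard * n = Nat.card G := by
  have := isPretransitive_of_forall_exists_apply_eq hG
  simpa [Subgroup.smul_def, Perm.smul_def] using MulAction.ncard_setOf_smul_eq_mul_card (G := G) a b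

end PermGroup

/-- For a transitive `G ≤ Sym(n)` and distinct `i j`, removing from `Der(G)`
the set `D = D_{i→j} ∪ D_{j→i}` of derangements mapping `i` to `j` or `j` to `i` leaves
`G_{j→j} ∪ G_{i→j}` as an independent set of size `2|G|/n` in `Cay(G, Der(G) \ D)`. -/
theorem stmt_0 {n : ℕ} (G : Subgroup (Equiv.Perm (Fin n)))
    (hG : ∀ a b : Fin n, ∃ σ ∈ G, σ a = b)
    (i j : Fin n) (hij : i ≠ j)
    (D : Set G)
    (hD : D = {σ ∈ der G | (σ : Equiv.Perm (Fin n)) i = j} ∪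
              {σ ∈ der G | (σ : Equiv.Perm (Fin n)) j = i}) :
    IsIndepSet (cayley G (der G \ D))
      ({σ : G | (σ : Equiv.Perm (Fin n)) j = j} ∪ {σ : G | (σ : Equiv.Perm (Fin n)) i = j}) ∧
    ({σ : G | (σ : Equiv.Perm (Fin n)) j = j} ∪
      {σ : G | (σ : Equiv.Perm (Fin n)) i = j}).ncard * n = 2 * Nat.card G := by
  subst hD
  constructor
  · refine isIndepSet_cayley_of_inv_mul_notMem ?_
    rintro σ (hσ | hσ) τ (hτ | hτ) ⟨hder, hnD⟩ <;>
      have hστ := coe_inv_mul_apply_of_apply_eq hσ hτ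
    · exact hder j hστ
    · exact hnD (Or.inl ⟨hder, hστ⟩)
    · exact hnD (Or.inr ⟨hder, hστ⟩)
    · exact hder i hστ
  · have hdisj : Disjoint {σ : G | (σ : Perm (Fin n)) j = j} {σ : G | (σ : Perm (Fin n)) i = j} :=
      Set.disjoint_left.mpr fun σ hj hi => hij ((σ : Perm (Fin n)).injective (hi.trans hj.symm))
    rw [Set.ncard_union_eq hdisj, add_mul, ncard_setOf_apply_eq_mul hG, ncard_setOf_apply_eq_mul hG,
      two_mul]
end

section
/- Let A be a group that is abelian, is of even order, and contains an element y of order 2, and form the generalized dicyclic group Dic(A, y) = ⟨x, A : x² = y, x⁻¹ax = a⁻¹ for all a ∈ A⟩. Then every faithful transitive action of Dic(A, y) on a finite set is regular, i.e., the stabilizer of every point is trivial. -/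
/-- Let `A` be an abelian subgroup of index 2 in `G`, let `x ∈ G \ A` with
`y = x² ∈ A` of order 2 and `x⁻¹ax = a⁻¹` for all `a ∈ A` (so that `G` is the generalized
dicyclic group `Dic(A, y)`). Then every faithful transitive action of `G` on a finite set
is regular: every point stabilizer is trivial. -/
theorem stmt_6 {G : Type*} [Group G] [Fintype G]
    (A : Subgroup G) (hcomm : ∀ a ∈ A, ∀ b ∈ A, a * b = b * a)
    (x : G) (hxA : x ∉ A) (hindex : A.index = 2)
    (hy : x ^ 2 ∈ A) (hyord : orderOf (x ^ 2) = 2)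
    (hconj : ∀ a ∈ A, x⁻¹ * a * x = a⁻¹)
    (Ω : Type*) [Fintype Ω] [MulAction G Ω] [FaithfulSMul G Ω]
    (htrans : MulAction.IsPretransitive G Ω) :
    ∀ ω : Ω, MulAction.stabilizer G ω = ⊥ := by
  -- elements outside A are exactly x * a for a ∈ A
  have hmem : ∀ g : G, g ∉ A → x⁻¹ * g ∈ A := by
    intro g hg
    rw [Subgroup.mul_mem_iff_of_index_two hindex]
    have hxinv : x⁻¹ ∉ A := fun h => hxA (by simpa using A.inv_mem h)
    simp [hxinv, hg]
  -- squares of elements outside A all equal x ^ 2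
  have hsq : ∀ g : G, g ∉ A → g ^ 2 = x ^ 2 := by
    intro g hg
    have ha : x⁻¹ * g ∈ A := hmem g hg
    have h1 : x⁻¹ * (x⁻¹ * g) * x = (x⁻¹ * g)⁻¹ := hconj _ ha
    have hgx : g = x * (x⁻¹ * g) := by group
    calc g ^ 2 = x * (x * (x⁻¹ * (x⁻¹ * g) * x)) * (x⁻¹ * g) := by rw [pow_two]; group
      _ = x * (x * (x⁻¹ * g)⁻¹) * (x⁻¹ * g) := by rw [h1]
      _ = x ^ 2 := by rw [pow_two]; group
  -- x ^ 2 is central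
  have hcent : ∀ g : G, g * x ^ 2 = x ^ 2 * g := by
    intro g
    by_cases hg : g ∈ A
    · exact hcomm g hg _ hy
    · have ha : x⁻¹ * g ∈ A := hmem g hg
      have h2 : (x⁻¹ * g) * x ^ 2 = x ^ 2 * (x⁻¹ * g) := hcomm _ ha _ hy
      calc g * x ^ 2 = x * ((x⁻¹ * g) * x ^ 2) := by group
        _ = x * (x ^ 2 * (x⁻¹ * g)) := by rw [h2]
        _ = x ^ 2 * g := by group
  intro ω
  rw [eq_bot_iff]
  intro h hh
  rw [Subgroup.mem_bot]
  rw [MulAction.mem_stabilizer_iff] at hh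
  -- x ^ 2 does not stabilize ω
  have hx2 : x ^ 2 • ω ≠ ω := by
    intro hfix
    have hall : ∀ ω' : Ω, x ^ 2 • ω' = (1 : G) • ω' := by
      intro ω'
      obtain ⟨g, hg⟩ := htrans.exists_smul_eq ω ω'
      rw [one_smul, ← hg, ← mul_smul, ← hcent, mul_smul, hfix]
    have : x ^ 2 = 1 := eq_of_smul_eq_smul hall
    rw [this, orderOf_one] at hyord
    exact absurd hyord (by norm_num)
  -- hence h ∈ A
  have hhA : h ∈ A := by
    by_contra hhA
    have := hsq h hhA
    have : x ^ 2 • ω = ω := by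
      rw [← this, pow_two, mul_smul, hh, hh]
    exact hx2 this
  -- h stabilizes every point
  have hall : ∀ ω' : Ω, h • ω' = (1 : G) • ω' := by
    intro ω'
    obtain ⟨g, hg⟩ := htrans.exists_smul_eq ω ω'
    have key : (g⁻¹ * h * g) • ω = ω := by
      by_cases hgA : g ∈ A
      · have : g⁻¹ * h * g = h := by
          rw [mul_assoc, hcomm h hhA g hgA]; group
        rw [this, hh]
      · have ha : x⁻¹ * g ∈ A := hmem g hgA
        have h1 : x⁻¹ * h * x = h⁻¹ := hconj h hhA
        have hc : (x⁻¹ * g) * h⁻¹ = h⁻¹ * (x⁻¹ * g) := hcomm _ ha h⁻¹ (A.inv_mem hhA)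
        have : g⁻¹ * h * g = h⁻¹ := by
          calc g⁻¹ * h * g = (x⁻¹ * g)⁻¹ * (x⁻¹ * h * x) * (x⁻¹ * g) := by group
            _ = (x⁻¹ * g)⁻¹ * h⁻¹ * (x⁻¹ * g) := by rw [h1]
            _ = h⁻¹ := by rw [mul_assoc, ← hc]; group
        rw [this, inv_smul_eq_iff]
        exact hh.symm
    rw [one_smul, ← hg, ← mul_smul]
    have : h * g = g * (g⁻¹ * h * g) := by group
    rw [this, mul_smul, key]
  exact eq_of_smul_eq_smul hall
end

section
/- Let G ≤ Sym(n) be a transitive permutation group such that H = Der(G) ∪ {1} is a subgroup of G and such that Der(G) is not contained in the alternating group Alt(n). If D is a nonempty subset of Der(G) consisting entirely of odd permutations, then the independence number of Cay(G, Der(G) \ D) equals 2|G|/n. -/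
/-!
Every non-identity element of `H` is a derangement, so `H` acts freely and `|H| ≤ n`; every
element outside `H` fixes a point, so Burnside's lemma for the transitive group `G` gives
`|H| ≥ n`. Hence `|G : H| = |G|/n`.

As `Der(G) ⊆ H`, vertices in different left cosets of `H` are never adjacent. Two distinct
non-adjacent vertices `x, y` of one coset have `x⁻¹y ∈ D` or `y⁻¹x ∈ D`, so `x⁻¹y` is odd; three
of them in one coset would make `b⁻¹c = (a⁻¹b)⁻¹(a⁻¹c)` both odd and even. So an independent set
meets each coset at most twice, and `{r, r d}`, over coset representatives `r` and a fixed
`d ∈ D`, is an independent set of size `2 |G : H|`.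
-/

open Finset MulAction

section CardSubgroup

variable {Γ α : Type*} [Group Γ] [MulAction Γ α] (H : Subgroup Γ)

theorem Subgroup.card_le_card_of_free [Finite α] (a : α) (hfree : ∀ g ∈ H, g • a = a → g = 1) :
    Nat.card H ≤ Nat.card α := by
  refine Nat.card_le_card_of_injective (fun h : H ↦ (h : Γ) • a) fun h₁ h₂ he ↦ ?_
  have h : ((h₂ : Γ)⁻¹ * h₁) • a = a := by rw [mul_smul, inv_smul_eq_iff]; exact he
  exact Subtype.ext (inv_mul_eq_one.mp (hfree _ (H.mul_mem (H.inv_mem h₂.2) h₁.2) h)).symm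

theorem Subgroup.card_le_card_of_forall_notMem_exists_fixed [Finite Γ] [Finite α]
    [IsPretransitive Γ α] (hfix : ∀ g ∉ H, ∃ a : α, g • a = a) : Nat.card α ≤ Nat.card H := by
  classical
  have := Fintype.ofFinite Γ
  have := Fintype.ofFinite α
  have horbits : Fintype.card (orbitRel.Quotient Γ α) ≤ 1 :=
    Fintype.card_le_one_iff_subsingleton.mpr
      ((pretransitive_iff_subsingleton_quotient Γ α).mp inferInstance)
  have hone : Fintype.card α ≤ ∑ g ∈ univ.filter (· ∈ H), Fintype.card (fixedBy α g) := by
    rw [← Fintype.card_congr (Equiv.subtypeUnivEquiv fun a ↦ one_smul Γ a)]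
    exact single_le_sum (f := fun g : Γ ↦ Fintype.card (fixedBy α g)) (fun _ _ ↦ Nat.zero_le _)
      (mem_filter.mpr ⟨mem_univ 1, H.one_mem⟩)
  have hrest :
      #(univ.filter (· ∉ H)) ≤ ∑ g ∈ univ.filter (· ∉ H), Fintype.card (fixedBy α g) := by
    simpa using card_nsmul_le_sum _ (fun g ↦ Fintype.card (fixedBy α g)) 1 fun g hg ↦ by
      obtain ⟨a, ha⟩ := hfix g (mem_filter.mp hg).2
      exact Fintype.card_pos_iff.mpr ⟨⟨a, ha⟩⟩
  have hsum : Fintype.card α + #(univ.filter (· ∉ H)) ≤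
      #(univ.filter (· ∈ H)) + #(univ.filter (· ∉ H)) :=
    calc Fintype.card α + #(univ.filter (· ∉ H))
        ≤ ∑ g ∈ univ.filter (· ∈ H), Fintype.card (fixedBy α g)
          + ∑ g ∈ univ.filter (· ∉ H), Fintype.card (fixedBy α g) := add_le_add hone hrest
      _ = Fintype.card (orbitRel.Quotient Γ α) * Fintype.card Γ := by
        rw [sum_filter_add_sum_filter_not, sum_card_fixedBy_eq_card_orbits_mul_card_group]
      _ ≤ Fintype.card Γ := by simpa using Nat.mul_le_mul_right (Fintype.card Γ) horbits
      _ = #(univ.filter (· ∈ H)) + #(univ.filter (· ∉ H)) :=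
        (card_filter_add_card_filter_not _).symm
  rw [Nat.card_eq_fintype_card, Nat.card_eq_fintype_card, Fintype.card_subtype]
  omega

theorem Subgroup.card_eq_card_of_mem_iff [Finite Γ] [Finite α] [Nonempty α] [IsPretransitive Γ α]
    (hH : ∀ g, g ∈ H ↔ g = 1 ∨ ∀ a : α, g • a ≠ a) : Nat.card H = Nat.card α := by
  obtain ⟨a⟩ := ‹Nonempty α›
  refine le_antisymm (H.card_le_card_of_free a fun g hg hga ↦ ?_)
    (H.card_le_card_of_forall_notMem_exists_fixed fun g hg ↦ ?_)
  · exact ((hH g).mp hg).resolve_right fun h ↦ h a hga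
  · simp only [hH, not_or, not_forall, not_not] at hg
    exact hg.2

end CardSubgroup

theorem indepNum_eq_of_isIndepSet {V : Type*} {X : SimpleGraph V} {k : ℕ}
    (hle : ∀ s : Finset V, IsIndepSet X s → #s ≤ k)
    (hex : ∃ s : Finset V, IsIndepSet X s ∧ #s = k) : indepNum X = k :=
  IsGreatest.csSup_eq ⟨hex, fun _ ⟨s, hs, hk⟩ ↦ hk ▸ hle s hs⟩

section Cayley

variable {Γ : Type*} [Group Γ] {C : Set Γ}

theorem cayley_adj_mul_left (g x y : Γ) :
    (cayley Γ C).Adj (g * x) (g * y) ↔ (cayley Γ C).Adj x y := by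
  simp only [cayley, mul_inv_rev, mul_assoc, inv_mul_cancel_left, ne_eq, mul_right_inj]

theorem cayley_not_adj_one_of_notMem {d : Γ} (hd : d ∉ C) : ¬ (cayley Γ C).Adj 1 d :=
  fun h ↦ hd (by simpa using h.2.1)

end Cayley

section OddConnectionSet

variable {Γ : Type*} [Group Γ] {H : Subgroup Γ} {χ : Γ →* ℤˣ} {D : Set Γ}

theorem map_inv_mul_eq_neg_one_of_not_adj (hD : ∀ d ∈ D, χ d = -1) {x y : Γ} (hxy : x ≠ y)
    (hH : x⁻¹ * y ∈ H) (h : ¬ (cayley Γ (((H : Set Γ) \ {1}) \ D)).Adj x y) :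
    χ (x⁻¹ * y) = -1 := by
  by_contra hχ
  have hyx : y⁻¹ * x = (x⁻¹ * y)⁻¹ := by group
  refine h ⟨hxy, ⟨⟨hH, ?_⟩, fun hd ↦ hχ (hD _ hd)⟩, ⟨⟨?_, ?_⟩, fun hd ↦ hχ ?_⟩⟩
  · simpa [inv_mul_eq_one] using hxy
  · rw [hyx]; exact H.inv_mem hH
  · simpa [inv_mul_eq_one] using hxy.symm
  · rw [← inv_inv (x⁻¹ * y), ← hyx, map_inv, hD _ hd]; rfl

theorem card_filter_mk_le_two [DecidableEq (Γ ⧸ H)] (hD : ∀ d ∈ D, χ d = -1) {s : Finset Γ}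
    (hs : IsIndepSet (cayley Γ (((H : Set Γ) \ {1}) \ D)) s) (q : Γ ⧸ H) :
    #{x ∈ s | (QuotientGroup.mk x : Γ ⧸ H) = q} ≤ 2 := by
  by_contra! h
  obtain ⟨a, ha, b, hb, c, hc, hab, hac, hbc⟩ := two_lt_card.mp h
  have hodd {x y : Γ} (hx : x ∈ {x ∈ s | (QuotientGroup.mk x : Γ ⧸ H) = q})
      (hy : y ∈ {x ∈ s | (QuotientGroup.mk x : Γ ⧸ H) = q}) (hxy : x ≠ y) : χ (x⁻¹ * y) = -1 := by
    rw [mem_filter] at hx hy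
    exact map_inv_mul_eq_neg_one_of_not_adj hD hxy
      (QuotientGroup.eq.mp (hx.2.trans hy.2.symm)) (hs hx.1 hy.1 hxy)
  have := hodd hb hc hbc
  rw [show b⁻¹ * c = (a⁻¹ * b)⁻¹ * (a⁻¹ * c) by group, map_mul, map_inv, hodd ha hb hab,
    hodd ha hc hac] at this
  exact absurd this (by decide)

theorem card_le_two_mul_index [H.FiniteIndex] (hD : ∀ d ∈ D, χ d = -1) {s : Finset Γ}
    (hs : IsIndepSet (cayley Γ (((H : Set Γ) \ {1}) \ D)) s) : #s ≤ 2 * H.index := by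
  classical
  have := Fintype.ofFinite (Γ ⧸ H)
  calc #s ≤ 2 * #(s.image (QuotientGroup.mk : Γ → Γ ⧸ H)) :=
        card_le_mul_card_image s 2 fun q _ ↦ card_filter_mk_le_two hD hs q
    _ ≤ 2 * H.index := by
        rw [Subgroup.index, Nat.card_eq_fintype_card]
        exact Nat.mul_le_mul_left 2 (card_le_univ _)

theorem exists_isIndepSet_card_eq_two_mul_index [H.FiniteIndex] (hDH : D ⊆ H)
    (hD : ∀ d ∈ D, χ d = -1) {d : Γ} (hd : d ∈ D) :
    ∃ s : Finset Γ, IsIndepSet (cayley Γ (((H : Set Γ) \ {1}) \ D)) s ∧ #s = 2 * H.index := by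
  classical
  have := Fintype.ofFinite (Γ ⧸ H)
  have hdH : d ∈ H := hDH hd
  have hd1 : d ≠ 1 := fun h ↦ by simpa [h] using hD d hd
  let f : (Γ ⧸ H) × Bool → Γ := fun p ↦ p.1.out * cond p.2 d 1
  have hf : ∀ p, (f p : Γ ⧸ H) = p.1 := fun ⟨q, b⟩ ↦ by
    rw [QuotientGroup.mk_mul_of_mem _ (by cases b <;> simp [hdH]), QuotientGroup.out_eq']
  have hinj : f.Injective := fun ⟨q, b⟩ ⟨q', b'⟩ he ↦ by
    obtain rfl : q = q' := (hf (q, b)).symm.trans ((congrArg _ he).trans (hf (q', b')))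
    cases b <;> cases b' <;> simp_all [f]
  refine ⟨univ.image f, fun x hx y hy hxy hadj ↦ ?_, ?_⟩
  · obtain ⟨⟨q, b⟩, -, rfl⟩ := mem_image.mp hx
    obtain ⟨⟨q', b'⟩, -, rfl⟩ := mem_image.mp hy
    obtain rfl : q = q' :=
      (hf (q, b)).symm.trans ((QuotientGroup.eq.mpr hadj.2.1.1.1).trans (hf (q', b')))
    have hnot : ¬ (cayley Γ (((H : Set Γ) \ {1}) \ D)).Adj 1 d :=
      cayley_not_adj_one_of_notMem fun h ↦ h.2 hd
    rw [cayley_adj_mul_left] at hadj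
    cases b <;> cases b' <;> simp only [cond_true, cond_false] at hadj
    exacts [hadj.ne rfl, hnot hadj, hnot hadj.symm, hadj.ne rfl]
  · rw [card_image_of_injective _ hinj, card_univ, Fintype.card_prod, Fintype.card_bool,
      Subgroup.index, Nat.card_eq_fintype_card, mul_comm]

theorem indepNum_cayley_eq_two_mul_index [H.FiniteIndex] (hDH : D ⊆ H) (hDne : D.Nonempty)
    (hD : ∀ d ∈ D, χ d = -1) : indepNum (cayley Γ (((H : Set Γ) \ {1}) \ D)) = 2 * H.index :=
  indepNum_eq_of_isIndepSet (fun _ ↦ card_le_two_mul_index hD)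
    (exists_isIndepSet_card_eq_two_mul_index hDH hD hDne.some_mem)

end OddConnectionSet

theorem stmt_7_general {n : ℕ} (G : Subgroup (Equiv.Perm (Fin n)))
    (hG : ∀ a b : Fin n, ∃ σ ∈ G, σ a = b)
    (H : Subgroup ↥G) (hH : (H : Set G) = der G ∪ {1})
    (D : Set ↥G) (hD : D ⊆ der G) (hDne : D.Nonempty)
    (hDodd : ∀ d ∈ D, Equiv.Perm.sign (d : Equiv.Perm (Fin n)) = -1) :
    indepNum (cayley G (der G \ D)) = 2 * (Nat.card G / n) := by
  obtain ⟨d, hd⟩ := hDne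
  have hn : 0 < n := Nat.pos_of_ne_zero fun h ↦ by
    subst h
    simpa [Subsingleton.elim (d : Equiv.Perm (Fin 0)) 1] using hDodd d hd
  have : Nonempty (Fin n) := ⟨⟨0, hn⟩⟩
  have : IsPretransitive G (Fin n) := ⟨fun a b ↦ let ⟨σ, hσ, h⟩ := hG a b; ⟨⟨σ, hσ⟩, h⟩⟩
  have hder : der G = (H : Set G) \ {1} := by
    have h1 : (1 : G) ∉ der G := fun h ↦ h ⟨0, hn⟩ rfl
    rw [hH, Set.union_sdiff_right, Set.sdiff_singleton_eq_self h1]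
  have hcard : Nat.card H = n := by
    simpa using H.card_eq_card_of_mem_iff (α := Fin n) fun g ↦ by
      rw [← SetLike.mem_coe, hH]
      simp [der, Subgroup.smul_def, Equiv.Perm.smul_def]
  have hindex : Nat.card G / n = H.index := by
    rw [← H.card_mul_index, hcard, Nat.mul_div_cancel_left _ hn]
  rw [hindex, hder]
  exact indepNum_cayley_eq_two_mul_index (χ := Equiv.Perm.sign.comp G.subtype)
    (hD.trans (hH ▸ Set.subset_union_left)) ⟨d, hd⟩ hDodd

/-- Let `G ≤ Sym(n)` be transitive with `H = Der(G) ∪ {1}` a subgroup and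
with `Der(G) ⊄ Alt(n)`. If `D` is a nonempty inverse-closed set of odd derangements, then
the independence number of `Cay(G, Der(G) \ D)` equals `2|G|/n`. -/
theorem stmt_7 {n : ℕ} (G : Subgroup (Equiv.Perm (Fin n)))
    (hG : ∀ a b : Fin n, ∃ σ ∈ G, σ a = b)
    (H : Subgroup ↥G) (hH : (H : Set G) = der G ∪ {1})
    (hodd : ∃ σ ∈ der G, Equiv.Perm.sign (σ : Equiv.Perm (Fin n)) = -1)
    (D : Set ↥G) (hD : D ⊆ der G) (hDne : D.Nonempty)
    (hDodd : ∀ d ∈ D, Equiv.Perm.sign (d : Equiv.Perm (Fin n)) = -1)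
    (hDinv : ∀ d ∈ D, d⁻¹ ∈ D) :
    indepNum (cayley G (der G \ D)) = 2 * (Nat.card G / n) :=
  stmt_7_general G hG H hH D hD hDne hDodd
end

section
/- Let A be an abelian group of order n and consider the generalized dihedral group D(A) acting on the n left cosets of H = ⟨x⟩. A non-identity element z ∈ D(A) fixes some coset if and only if z = xa² for some a ∈ A. Consequently, if y and z are elements of the coset xA and neither is a derangement, then z = yd² for some d ∈ A, and y and z are conjugate in D(A). -/
/-- Let `G = D(A)` be the generalized dihedral group over an abelian group
`A` (presented abstractly: `A ≤ G` abelian of index 2, `x ∉ A`, `x² = 1`, `xax = a⁻¹`),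
acting on the left cosets of `H = ⟨x⟩`. A non-identity `z ∈ G` fixes some coset iff
`z = xa²` for some `a ∈ A`; consequently if `y, z ∈ xA` are both non-derangements then
`z = yd²` for some `d ∈ A` and `y` and `z` are conjugate in `G`. -/
theorem stmt_9 {G : Type*} [Group G]
    (A : Subgroup G) (hcomm : ∀ a ∈ A, ∀ b ∈ A, a * b = b * a)
    (x : G) (hx2 : x ^ 2 = 1) (hxA : x ∉ A) (hindex : A.index = 2)
    (hconj : ∀ a ∈ A, x * a * x = a⁻¹) :
    (∀ z : G, z ≠ 1 →
      ((∃ c : G ⧸ Subgroup.zpowers x, z • c = c) ↔ ∃ a ∈ A, z = x * a ^ 2)) ∧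
    (∀ y z : G, x⁻¹ * y ∈ A → x⁻¹ * z ∈ A →
      (∃ c : G ⧸ Subgroup.zpowers x, y • c = c) →
      (∃ c : G ⧸ Subgroup.zpowers x, z • c = c) →
      (∃ d ∈ A, z = y * d ^ 2) ∧ IsConj y z) := by
  have hxx : x * x = 1 := by rw [← pow_two]; exact hx2
  have hxinv : x⁻¹ = x := by rw [eq_comm, eq_inv_iff_mul_eq_one]; exact hxx
  -- x * a = a⁻¹ * x for a ∈ A
  have hswap : ∀ a ∈ A, x * a = a⁻¹ * x := by
    intro a ha
    have := hconj a ha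
    calc x * a = x * a * x * x⁻¹ := by group
    _ = a⁻¹ * x := by rw [this, hxinv]
  -- elements of zpowers x are 1 or x
  have hzp : ∀ h ∈ Subgroup.zpowers x, h = 1 ∨ h = x := by
    intro h hh
    obtain ⟨k, rfl⟩ := Subgroup.mem_zpowers_iff.mp hh
    have h2z : x ^ (2 : ℤ) = 1 := by
      have : ((2 : ℕ) : ℤ) = (2 : ℤ) := by norm_num
      rw [← this, zpow_natCast, hx2]
    rcases Int.even_or_odd k with ⟨m, rfl⟩ | ⟨m, rfl⟩
    · left
      rw [← two_mul, zpow_mul, h2z, one_zpow]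
    · right
      rw [zpow_add, zpow_one, zpow_mul, h2z, one_zpow, one_mul]
  -- the main fixed-point characterization
  have main : ∀ z : G, z ≠ 1 →
      ((∃ c : G ⧸ Subgroup.zpowers x, z • c = c) ↔ ∃ a ∈ A, z = x * a ^ 2) := by
    intro z hz
    constructor
    · rintro ⟨c, hc⟩
      obtain ⟨g, rfl⟩ := QuotientGroup.mk_surjective c
      have : (QuotientGroup.mk (z * g) : G ⧸ Subgroup.zpowers x) = QuotientGroup.mk g := hc
      have hmem : (z * g)⁻¹ * g ∈ Subgroup.zpowers x := QuotientGroup.eq.mp this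
      rcases hzp _ hmem with h1 | h1
      · exfalso
        apply hz
        have : (z * g)⁻¹ * g = g⁻¹ * z⁻¹ * g := by group
        rw [this] at h1
        have : z⁻¹ = 1 := by
          have := congrArg (fun w => g * w * g⁻¹) h1
          simpa [mul_assoc] using this
        simpa using congrArg (·⁻¹) this
      · -- g⁻¹ * z⁻¹ * g = x, so z = g * x * g⁻¹ (using x⁻¹ = x)
        have hzg : z = g * x * g⁻¹ := by
          have : (z * g)⁻¹ * g = g⁻¹ * z⁻¹ * g := by group
          rw [this] at h1
          have h2 : z⁻¹ = g * x * g⁻¹ := by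
            have := congrArg (fun w => g * w * g⁻¹) h1
            simpa [mul_assoc] using this
          have h3 : z = g * x⁻¹ * g⁻¹ := by
            have := congrArg (·⁻¹) h2
            simpa [mul_assoc] using this
          rw [hxinv] at h3; exact h3
        by_cases hg : g ∈ A
        · refine ⟨g⁻¹, A.inv_mem hg, ?_⟩
          have : x * g⁻¹ = g * x := by rw [hswap g⁻¹ (A.inv_mem hg), inv_inv]
          calc z = g * x * g⁻¹ := hzg
          _ = x * g⁻¹ * g⁻¹ := by rw [← this]
          _ = x * g⁻¹ ^ 2 := by rw [pow_two, mul_assoc]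
        · -- g = x * a with a = x⁻¹ * g ∈ A
          have ha : x⁻¹ * g ∈ A := by
            have := Subgroup.mul_mem_iff_of_index_two hindex (a := x⁻¹) (b := g)
            rw [this]
            constructor
            · intro h; exact absurd (by simpa [hxinv] using A.inv_mem h) hxA
            · intro h; exact absurd h hg
          set a := x⁻¹ * g with hadef
          have hg' : g = x * a := by rw [hadef, ← mul_assoc, hxinv, hxx, one_mul]
          refine ⟨a, ha, ?_⟩
          have h1 : x * a = a⁻¹ * x := hswap a ha
          have h2 : x * a⁻¹ = a * x := by
            rw [hswap a⁻¹ (A.inv_mem ha), inv_inv]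
          calc z = g * x * g⁻¹ := hzg
          _ = (x * a) * x * (x * a)⁻¹ := by rw [hg']
          _ = (x * a * x) * a⁻¹ * x⁻¹ := by group
          _ = a⁻¹ * a⁻¹ * x := by rw [hconj a ha, hxinv]
          _ = a⁻¹ * (a⁻¹ * x) := by rw [mul_assoc]
          _ = a⁻¹ * (x * a) := by rw [← h1]
          _ = (a⁻¹ * x) * a := by rw [← mul_assoc]
          _ = (x * a) * a := by rw [← h1]
          _ = x * a ^ 2 := by rw [pow_two, mul_assoc]
    · rintro ⟨a, ha, rfl⟩
      refine ⟨QuotientGroup.mk a⁻¹, ?_⟩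
      show (QuotientGroup.mk (x * a ^ 2 * a⁻¹) : G ⧸ Subgroup.zpowers x) = QuotientGroup.mk a⁻¹
      rw [QuotientGroup.eq]
      have h1 : x * a ^ 2 * a⁻¹ = x * a := by rw [pow_two]; group
      have h2 : (x * a ^ 2 * a⁻¹)⁻¹ * a⁻¹ = x := by
        rw [h1, hswap a ha]
        calc (a⁻¹ * x)⁻¹ * a⁻¹ = x⁻¹ * a * a⁻¹ := by group
        _ = x := by rw [hxinv]; group
      rw [h2]
      exact Subgroup.mem_zpowers x
  constructor
  · exact main
  · intro y z hy hz hyf hzf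
    have hyne : y ≠ 1 := by
      intro h; rw [h, mul_one] at hy
      exact hxA (by simpa [hxinv] using A.inv_mem hy)
    have hzne : z ≠ 1 := by
      intro h; rw [h, mul_one] at hz
      exact hxA (by simpa [hxinv] using A.inv_mem hz)
    obtain ⟨a, ha, hya⟩ := (main y hyne).mp hyf
    obtain ⟨b, hb, hzb⟩ := (main z hzne).mp hzf
    have hcomm' : a⁻¹ * b = b * a⁻¹ := hcomm a⁻¹ (A.inv_mem ha) b hb
    constructor
    · refine ⟨a⁻¹ * b, A.mul_mem (A.inv_mem ha) hb, ?_⟩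
      have : (a⁻¹ * b) ^ 2 = a⁻¹ * a⁻¹ * (b * b) := by
        rw [pow_two]
        calc a⁻¹ * b * (a⁻¹ * b) = a⁻¹ * (b * a⁻¹) * b := by group
        _ = a⁻¹ * (a⁻¹ * b) * b := by rw [← hcomm']
        _ = a⁻¹ * a⁻¹ * (b * b) := by group
      rw [hzb, hya, this, pow_two, pow_two]
      group
    · rw [isConj_iff]
      refine ⟨a * b⁻¹, ?_⟩
      set h := a * b⁻¹ with hhdef
      have hhA : h ∈ A := A.mul_mem ha (A.inv_mem hb)
      have hx_h : h * x = x * h⁻¹ := by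
        rw [hswap h⁻¹ (A.inv_mem hhA), inv_inv]
      have hc1 : h⁻¹ * a = a * h⁻¹ := hcomm h⁻¹ (A.inv_mem hhA) a ha
      have key : h⁻¹ * a ^ 2 * h⁻¹ = b ^ 2 := by
        have hh : h⁻¹ = b * a⁻¹ := by rw [hhdef]; group
        rw [hh]
        have c1 : a⁻¹ * b = b * a⁻¹ := hcomm'
        calc b * a⁻¹ * a ^ 2 * (b * a⁻¹) = b * (a * b) * a⁻¹ := by rw [pow_two]; group
        _ = b * (b * a) * a⁻¹ := by rw [hcomm a ha b hb]
        _ = b * b := by group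
        _ = b ^ 2 := (pow_two b).symm
      calc h * y * h⁻¹ = h * (x * a ^ 2) * h⁻¹ := by rw [hya]
      _ = (h * x) * a ^ 2 * h⁻¹ := by group
      _ = x * (h⁻¹ * a ^ 2 * h⁻¹) := by rw [hx_h]; group
      _ = x * b ^ 2 := by rw [key]
      _ = z := hzb.symm
end

section
/- Let n be even, let A be an abelian group of order n, and let G = D(A) act on the n left cosets of H = ⟨x⟩. Let D = {d, d⁻¹} ⊆ Der(G). Then α(Cay(G, Der(G) \ D)) ∈ {2, 4, 6}; more precisely it equals 6 if and only if d ∈ A and d has order 3; it equals 4 if and only if d does not have order 3 and d = a² for some a ∈ A; and it equals 2 otherwise. -/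
/-- The set of derangements of the action of `G` on the left cosets of `H`:
the elements of `G` fixing no coset. -/
def derQ (G : Type*) [Group G] (H : Subgroup G) : Set G :=
  {g : G | ∀ c : G ⧸ H, g • c ≠ c}

/-!
Every element outside `A` has the form `a * x` with `a ∈ A`, and the coset action on `G ⧸ ⟨x⟩`
fixes a point exactly for `1` and for the conjugates `a ^ 2 * x` of `x`. Hence `s` is independent
iff every quotient `g⁻¹ * h` of elements of `s` lies in `{1, d, d⁻¹}` or is some `a ^ 2 * x`.
Quotients inside one coset of `A` lie in `A`, so in `{1, d, d⁻¹}`: each half of `s` has at most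
three elements, and at most two unless `d` has order `3`. Quotients across the cosets are of the
form `a ^ 2 * x`, and two of them with a common endpoint `k` give
`g⁻¹ * h = (g⁻¹ * k) * (h⁻¹ * k)⁻¹ = (a * b⁻¹) ^ 2`; so if `d` is not a square in `A`, a half with
two elements forces the other half to be empty. Conversely, if `T` has all quotients in
`{1, d, d⁻¹}` and squares of elements of `A`, then `T ∪ T * x` is independent, and
`T = {1}`, `{1, d}`, `{1, d, d⁻¹}` give the values `2`, `4`, `6`.
-/

lemma mem_zpowers_iff_of_sq_eq_one {G : Type*} [Group G] {x g : G} (hx : x ^ 2 = 1) :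
    g ∈ Subgroup.zpowers x ↔ g = 1 ∨ g = x := by
  refine ⟨?_, by rintro (rfl | rfl) <;> simp [Subgroup.mem_zpowers]⟩
  rw [Subgroup.mem_zpowers_iff]
  rintro ⟨k, rfl⟩
  rw [zpow_eq_zpow_emod' k hx]
  rcases Int.emod_two_eq k with h | h <;> simp [h]

section Cayley

variable {Γ : Type*} [Group Γ] {C : Set Γ}

lemma isIndepSet_cayley_iff (hC : ∀ g ∈ C, g⁻¹ ∈ C) (hC1 : 1 ∉ C) {s : Set Γ} :
    IsIndepSet (cayley Γ C) s ↔ ∀ g ∈ s, ∀ h ∈ s, g⁻¹ * h ∉ C := by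
  refine ⟨fun hs g hg h hh hgh => ?_, fun hs g hg h hh _ hadj => hs g hg h hh hadj.2.1⟩
  obtain rfl | hne := eq_or_ne g h
  · exact hC1 (by simpa using hgh)
  · exact hs hg hh hne ⟨hne, hgh, by simpa using hC _ hgh⟩

lemma indepNum_eq_of_forall_card_le {V : Type*} {X : SimpleGraph V} {k : ℕ}
    (hex : ∃ s : Finset V, IsIndepSet X ↑s ∧ s.card = k)
    (hle : ∀ s : Finset V, IsIndepSet X ↑s → s.card ≤ k) : indepNum X = k := by
  have hbdd : BddAbove {k | ∃ s : Finset V, IsIndepSet X ↑s ∧ s.card = k} :=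
    ⟨k, by rintro _ ⟨s, hs, rfl⟩; exact hle s hs⟩
  exact le_antisymm (csSup_le ⟨k, hex⟩ (by rintro _ ⟨s, hs, rfl⟩; exact hle s hs))
    (le_csSup hbdd hex)

end Cayley

section Derangements

variable {G : Type*} [Group G] {H : Subgroup G} {g : G}

lemma inv_mem_derQ (hg : g ∈ derQ G H) : g⁻¹ ∈ derQ G H :=
  fun c hc => hg c (eq_inv_smul_iff.mp hc.symm)

lemma notMem_derQ_iff : g ∉ derQ G H ↔ ∃ c : G, c⁻¹ * g * c ∈ H := by
  simp only [derQ, Set.mem_ofPred_eq, not_forall, not_not, QuotientGroup.mk_surjective.exists]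
  refine exists_congr fun c => ?_
  rw [MulAction.Quotient.smul_mk, eq_comm, QuotientGroup.eq, smul_eq_mul, mul_assoc]

lemma one_notMem_derQ : (1 : G) ∉ derQ G H :=
  notMem_derQ_iff.2 ⟨1, by simp⟩

end Derangements

section PairwiseQuotients

variable {G : Type*} [Group G] {d : G}

lemma orderOf_eq_three_of_inv_mul_mem {u v : G} (hu : u ∈ ({d, d⁻¹} : Set G))
    (hv : v ∈ ({d, d⁻¹} : Set G)) (huv : u ≠ v) (hw : u⁻¹ * v ∈ ({d, d⁻¹} : Set G)) :
    orderOf d = 3 := by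
  have hd1 : d ≠ 1 := by
    rintro rfl
    simp_all
  refine orderOf_eq_prime ?_ hd1
  simp only [Set.mem_insert_iff, Set.mem_singleton_iff] at hu hv hw
  rcases hu with rfl | rfl <;> rcases hv with rfl | rfl
  · exact absurd rfl huv
  · rcases hw with hw | hw
    · calc u ^ 3 = u * u * (u⁻¹ * u⁻¹) := by rw [hw, pow_succ, sq]
        _ = 1 := by group
    · exact absurd (by simpa using hw) hd1
  · rw [inv_inv] at hw
    rcases hw with hw | hw
    · exact absurd (by simpa using hw) hd1
    · rw [pow_succ, sq, hw, inv_mul_cancel]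
  · exact absurd rfl huv

lemma card_le_three_of_forall_inv_mul_mem {t : Finset G}
    (ht : ∀ g ∈ t, ∀ h ∈ t, g⁻¹ * h ∈ ({1, d, d⁻¹} : Set G)) : t.card ≤ 3 := by
  classical
  obtain rfl | ⟨g, hg⟩ := t.eq_empty_or_nonempty
  · simp
  calc t.card ≤ ({1, d, d⁻¹} : Finset G).card :=
        Finset.card_le_card_of_injOn (g⁻¹ * ·) (fun h hh => by simpa using ht g hg h hh)
          (mul_right_injective g⁻¹).injOn
    _ ≤ 3 := Finset.card_le_three

lemma card_le_two_of_forall_inv_mul_mem (hd : orderOf d ≠ 3) {t : Finset G}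
    (ht : ∀ g ∈ t, ∀ h ∈ t, g⁻¹ * h ∈ ({1, d, d⁻¹} : Set G)) : t.card ≤ 2 := by
  by_contra! h2
  obtain ⟨a, ha, b, hb, c, hc, hab, hac, hbc⟩ := Finset.two_lt_card.1 h2
  have hne {g h : G} (hg : g ∈ t) (hh : h ∈ t) (hgh : g ≠ h) : g⁻¹ * h ∈ ({d, d⁻¹} : Set G) :=
    ((ht g hg h hh).resolve_left (by rwa [inv_mul_eq_one]))
  refine hd (orderOf_eq_three_of_inv_mul_mem (hne ha hb hab) (hne ha hc hac) ?_ ?_)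
  · simpa using hbc
  · simpa [mul_assoc] using hne hb hc hbc

lemma mem_of_mem_pair_inv {H : Subgroup G} {q : G} (hq : q ∈ ({d, d⁻¹} : Set G)) (hqH : q ∈ H) :
    d ∈ H := by
  rcases hq with rfl | rfl
  · exact hqH
  · exact inv_mem_iff.1 hqH

lemma exists_sq_of_orderOf_eq_three {H : Subgroup G} (hdH : d ∈ H) (hd : orderOf d = 3) :
    ∃ a ∈ H, d = a ^ 2 :=
  ⟨d ^ 2, pow_mem hdH 2, by rw [← pow_mul, pow_succ' d 3, ← hd, pow_orderOf_eq_one, mul_one]⟩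

end PairwiseQuotients

structure IsGenDihedral {G : Type*} [Group G] (A : Subgroup G) (x : G) : Prop where
  comm : ∀ a ∈ A, ∀ b ∈ A, a * b = b * a
  sq_eq_one : x ^ 2 = 1
  notMem : x ∉ A
  index_eq_two : A.index = 2
  conj_eq_inv : ∀ a ∈ A, x * a * x = a⁻¹

abbrev derCayley {G : Type*} [Group G] (x d : G) : SimpleGraph G :=
  cayley G (derQ G (Subgroup.zpowers x) \ {d, d⁻¹})

namespace IsGenDihedral

variable {G : Type*} [Group G] {A : Subgroup G} {x d : G} (hD : IsGenDihedral A x)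
include hD

lemma inv_mul_mem_iff {g h : G} : g⁻¹ * h ∈ A ↔ (g ∈ A ↔ h ∈ A) := by
  rw [Subgroup.mul_mem_iff_of_index_two hD.index_eq_two, inv_mem_iff]

lemma mul_x_mem_of_notMem {g : G} (hg : g ∉ A) : g * x ∈ A :=
  (Subgroup.mul_mem_iff_of_index_two hD.index_eq_two).2 (iff_of_false hg hD.notMem)

lemma inv_x : x⁻¹ = x :=
  inv_eq_of_mul_eq_one_right (by rw [← sq, hD.sq_eq_one])

lemma x_mul {a : G} (ha : a ∈ A) : x * a = a⁻¹ * x := by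
  rw [eq_mul_inv_of_mul_eq (hD.conj_eq_inv a ha), hD.inv_x]

lemma conj_x_inv {a : G} (ha : a ∈ A) : x⁻¹ * a * x = a⁻¹ := by
  rw [hD.inv_x, hD.conj_eq_inv a ha]

lemma conj_x {a : G} (ha : a ∈ A) : a * x * a⁻¹ = a ^ 2 * x := by
  rw [mul_assoc, hD.x_mul (inv_mem ha), inv_inv, ← mul_assoc, sq]

lemma exists_conj_eq_x_iff {g : G} :
    (∃ c : G, c⁻¹ * g * c = x) ↔ ∃ a ∈ A, g = a ^ 2 * x := by
  constructor
  · rintro ⟨c, hc⟩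
    obtain rfl : g = c * x * c⁻¹ := by rw [← hc]; group
    by_cases hcA : c ∈ A
    · exact ⟨c, hcA, hD.conj_x hcA⟩
    · refine ⟨c * x, hD.mul_x_mem_of_notMem hcA, ?_⟩
      rw [← hD.conj_x (hD.mul_x_mem_of_notMem hcA)]
      group
  · rintro ⟨a, ha, rfl⟩
    exact ⟨a, by rw [← hD.conj_x ha]; group⟩

lemma notMem_derQ_iff {g : G} :
    g ∉ derQ G (Subgroup.zpowers x) ↔ g = 1 ∨ ∃ a ∈ A, g = a ^ 2 * x := by
  rw [_root_.notMem_derQ_iff, ← hD.exists_conj_eq_x_iff]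
  have hconj_one (c : G) : c⁻¹ * g * c = 1 ↔ g = 1 := by
    rw [mul_eq_one_iff_eq_inv, mul_eq_left]
  simp only [mem_zpowers_iff_of_sq_eq_one hD.sq_eq_one, exists_or, hconj_one, exists_const]

lemma sq_mul_x_notMem {a : G} (ha : a ∈ A) : a ^ 2 * x ∉ A :=
  (Subgroup.mul_mem_cancel_left A (pow_mem ha 2)).not.2 hD.notMem

lemma isIndepSet_derCayley_iff {s : Set G} :
    IsIndepSet (derCayley x d) s ↔
      ∀ g ∈ s, ∀ h ∈ s, g⁻¹ * h ∈ ({1, d, d⁻¹} : Set G) ∨ ∃ a ∈ A, g⁻¹ * h = a ^ 2 * x := by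
  have hinv : ∀ g ∈ derQ G (Subgroup.zpowers x) \ {d, d⁻¹},
      g⁻¹ ∈ derQ G (Subgroup.zpowers x) \ {d, d⁻¹} := by
    rintro g ⟨hg, hgd⟩
    exact ⟨inv_mem_derQ hg, fun h => hgd (by simpa [inv_eq_iff_eq_inv, or_comm] using h)⟩
  rw [isIndepSet_cayley_iff hinv (fun h => one_notMem_derQ h.1)]
  simp only [Set.mem_sdiff, not_and_or, not_not, hD.notMem_derQ_iff]
  refine forall₄_congr fun g _ h _ => ?_
  simp only [Set.mem_insert_iff, Set.mem_singleton_iff, or_assoc, or_comm]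

lemma inv_mul_mem_of_isIndepSet {s : Set G} (hs : IsIndepSet (derCayley x d) s) {g h : G}
    (hg : g ∈ s) (hh : h ∈ s) (hA : g⁻¹ * h ∈ A) : g⁻¹ * h ∈ ({1, d, d⁻¹} : Set G) :=
  ((hD.isIndepSet_derCayley_iff.1 hs g hg h hh).resolve_right
    fun ⟨_, ha, hgh⟩ => hD.sq_mul_x_notMem ha (hgh ▸ hA))

lemma sq_mul_inv_sq {a b : G} (ha : a ∈ A) (hb : b ∈ A) : a ^ 2 * (b ^ 2)⁻¹ = (a * b⁻¹) ^ 2 := by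
  rw [Commute.mul_pow (hD.comm a ha _ (inv_mem hb)), inv_pow]

lemma exists_sq_of_isIndepSet {s : Set G} (hs : IsIndepSet (derCayley x d) s) {g h k : G}
    (hg : g ∈ s) (hh : h ∈ s) (hk : k ∈ s) (hgh : g⁻¹ * h ∈ ({d, d⁻¹} : Set G))
    (hghA : g⁻¹ * h ∈ A) (hgk : g⁻¹ * k ∉ A) (hhk : h⁻¹ * k ∉ A) : ∃ a ∈ A, d = a ^ 2 := by
  have hdA : d ∈ A := mem_of_mem_pair_inv hgh hghA
  simp only [Set.mem_insert_iff, Set.mem_singleton_iff] at hgh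
  have cross {g : G} (hg : g ∈ s) (hgk : g⁻¹ * k ∉ A) : ∃ a ∈ A, g⁻¹ * k = a ^ 2 * x := by
    refine (hD.isIndepSet_derCayley_iff.1 hs g hg k hk).resolve_left fun hmem => hgk ?_
    simp only [Set.mem_insert_iff, Set.mem_singleton_iff] at hmem
    rcases hmem with hmem | hmem | hmem <;> simp [hmem, hdA]
  obtain ⟨a, ha, hak⟩ := cross hg hgk
  obtain ⟨b, hb, hbk⟩ := cross hh hhk
  have hsq : g⁻¹ * h = (a * b⁻¹) ^ 2 := by
    rw [← hD.sq_mul_inv_sq ha hb]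
    calc g⁻¹ * h = g⁻¹ * k * (h⁻¹ * k)⁻¹ := by group
      _ = a ^ 2 * (b ^ 2)⁻¹ := by rw [hak, hbk]; group
  rcases hgh with hgh | hgh
  · exact ⟨a * b⁻¹, mul_mem ha (inv_mem hb), hgh ▸ hsq⟩
  · exact ⟨(a * b⁻¹)⁻¹, inv_mem (mul_mem ha (inv_mem hb)), by rw [inv_pow, ← hsq, hgh, inv_inv]⟩

lemma card_le_two_mul_of_isIndepSet {s : Finset G} (hs : IsIndepSet (derCayley x d) ↑s) {m : ℕ}
    (hm : ∀ t : Finset G, (∀ g ∈ t, ∀ h ∈ t, g⁻¹ * h ∈ ({1, d, d⁻¹} : Set G)) → t.card ≤ m) :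
    s.card ≤ 2 * m := by
  classical
  have hpart (p : G → Prop) [DecidablePred p] (hp : ∀ g h, p g → p h → (g ∈ A ↔ h ∈ A)) :
      (s.filter p).card ≤ m :=
    hm _ fun g hg h hh => by
      rw [Finset.mem_filter] at hg hh
      exact hD.inv_mul_mem_of_isIndepSet hs hg.1 hh.1 (hD.inv_mul_mem_iff.2 (hp g h hg.2 hh.2))
  have hA := hpart (· ∈ A) fun _ _ hg hh => iff_of_true hg hh
  have hB := hpart (· ∉ A) fun _ _ hg hh => iff_of_false hg hh
  rw [← Finset.card_filter_add_card_filter_not (· ∈ A)]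
  omega

lemma card_le_six_of_isIndepSet {s : Finset G} (hs : IsIndepSet (derCayley x d) ↑s) :
    s.card ≤ 6 :=
  hD.card_le_two_mul_of_isIndepSet hs fun _ => card_le_three_of_forall_inv_mul_mem

lemma card_le_four_of_isIndepSet (hd : orderOf d ≠ 3) {s : Finset G}
    (hs : IsIndepSet (derCayley x d) ↑s) : s.card ≤ 4 :=
  hD.card_le_two_mul_of_isIndepSet hs fun _ => card_le_two_of_forall_inv_mul_mem hd

lemma card_le_two_of_one_lt_card (hsq : ¬∃ a ∈ A, d = a ^ 2) {s P Q : Finset G}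
    (hs : IsIndepSet (derCayley x d) ↑s) (hP : P ⊆ s) (hQ : Q ⊆ s)
    (hPP : ∀ g ∈ P, ∀ h ∈ P, g⁻¹ * h ∈ A) (hPQ : ∀ g ∈ P, ∀ k ∈ Q, g⁻¹ * k ∉ A)
    (hP1 : 1 < P.card) : Q.card = 0 ∧ P.card ≤ 2 := by
  obtain ⟨g, hg, h, hh, hgh⟩ := Finset.one_lt_card.1 hP1
  have hd : g⁻¹ * h ∈ ({d, d⁻¹} : Set G) :=
    (hD.inv_mul_mem_of_isIndepSet hs (hP hg) (hP hh) (hPP g hg h hh)).resolve_left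
      (by rwa [inv_mul_eq_one])
  refine ⟨Finset.card_eq_zero.2 (Finset.eq_empty_of_forall_notMem fun k hk => hsq ?_), ?_⟩
  · exact hD.exists_sq_of_isIndepSet hs (hP hg) (hP hh) (hQ hk) hd (hPP g hg h hh)
      (hPQ g hg k hk) (hPQ h hh k hk)
  · exact card_le_two_of_forall_inv_mul_mem
      (fun hd3 => hsq (exists_sq_of_orderOf_eq_three (mem_of_mem_pair_inv hd (hPP g hg h hh)) hd3))
      fun g hg h hh => hD.inv_mul_mem_of_isIndepSet hs (hP hg) (hP hh) (hPP g hg h hh)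

lemma card_le_two_of_isIndepSet (hsq : ¬∃ a ∈ A, d = a ^ 2) {s : Finset G}
    (hs : IsIndepSet (derCayley x d) ↑s) : s.card ≤ 2 := by
  classical
  have hAB := hD.card_le_two_of_one_lt_card hsq hs (s.filter_subset (· ∈ A))
    (s.filter_subset (· ∉ A)) (by simp_all [hD.inv_mul_mem_iff]) (by simp_all [hD.inv_mul_mem_iff])
  have hBA := hD.card_le_two_of_one_lt_card hsq hs (s.filter_subset (· ∉ A))
    (s.filter_subset (· ∈ A)) (by simp_all [hD.inv_mul_mem_iff]) (by simp_all [hD.inv_mul_mem_iff])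
  rw [← Finset.card_filter_add_card_filter_not (· ∈ A)]
  omega

lemma isIndepSet_union_image_mul_x [DecidableEq G] {T : Finset G}
    (hT : ∀ t ∈ T, ∀ u ∈ T, t⁻¹ * u ∈ ({1, d, d⁻¹} : Set G) ∧ ∃ a ∈ A, t⁻¹ * u = a ^ 2) :
    IsIndepSet (derCayley x d) ↑(T ∪ T.image (· * x)) := by
  have hA {t u : G} (ht : t ∈ T) (hu : u ∈ T) : t⁻¹ * u ∈ A := by
    obtain ⟨a, ha, hsq⟩ := (hT t ht u hu).2
    exact hsq ▸ pow_mem ha 2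
  rw [hD.isIndepSet_derCayley_iff]
  simp only [Finset.coe_union, Finset.coe_image, Set.mem_union, Finset.mem_coe, Set.mem_image]
  rintro _ (ht | ⟨t, ht, rfl⟩) _ (hu | ⟨u, hu, rfl⟩)
  · exact Or.inl (hT _ ht _ hu).1
  · obtain ⟨a, ha, hsq⟩ := (hT _ ht _ hu).2
    exact Or.inr ⟨a, ha, by rw [← mul_assoc, hsq]⟩
  · obtain ⟨b, hb, hsq⟩ := (hT _ hu _ ht).2
    refine Or.inr ⟨b, hb, ?_⟩
    rw [← hsq, mul_inv_rev, hD.inv_x, mul_assoc, hD.x_mul (hA ht hu), mul_inv_rev, inv_inv]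
  · left
    rw [show (t * x)⁻¹ * (u * x) = x⁻¹ * (t⁻¹ * u) * x by group, hD.conj_x_inv (hA ht hu),
      mul_inv_rev, inv_inv]
    exact (hT _ hu _ ht).1

lemma card_union_image_mul_x [DecidableEq G] {T : Finset G}
    (hT : ∀ t ∈ T, ∀ u ∈ T, t⁻¹ * u ∈ A) : (T ∪ T.image (· * x)).card = 2 * T.card := by
  rw [Finset.card_union_of_disjoint, Finset.card_image_of_injective _ (mul_left_injective x),
    two_mul]
  refine Finset.disjoint_left.2 fun t ht hmem => ?_
  obtain ⟨u, hu, rfl⟩ := Finset.mem_image.1 hmem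
  exact hD.notMem (by simpa using hT u hu _ ht)

lemma exists_isIndepSet_card_eq_two_mul {T : Finset G}
    (hT : ∀ t ∈ T, ∀ u ∈ T, t⁻¹ * u ∈ ({1, d, d⁻¹} : Set G) ∧ ∃ a ∈ A, t⁻¹ * u = a ^ 2) :
    ∃ s : Finset G, IsIndepSet (derCayley x d) ↑s ∧ s.card = 2 * T.card := by
  classical
  refine ⟨_, hD.isIndepSet_union_image_mul_x hT, hD.card_union_image_mul_x fun t ht u hu => ?_⟩
  obtain ⟨a, ha, hsq⟩ := (hT t ht u hu).2
  exact hsq ▸ pow_mem ha 2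

lemma indepNum_derCayley_eq_six (hdA : d ∈ A) (hd : orderOf d = 3) :
    indepNum (derCayley x d) = 6 := by
  classical
  have hd3 : d ^ 3 = 1 := hd ▸ pow_orderOf_eq_one d
  have hdd : d * d = d⁻¹ := by rw [eq_inv_iff_mul_eq_one, ← pow_two, ← pow_succ, hd3]
  have hdd' : d⁻¹ * d⁻¹ = d := by rw [← mul_inv_rev, hdd, inv_inv]
  have h1 : ∃ a ∈ A, (1 : G) = a ^ 2 := ⟨1, one_mem A, (one_pow 2).symm⟩
  have hsq : ∃ a ∈ A, d = a ^ 2 := ⟨d⁻¹, inv_mem hdA, by rw [sq, hdd']⟩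
  have hsq' : ∃ a ∈ A, d⁻¹ = a ^ 2 := ⟨d, hdA, by rw [sq, hdd]⟩
  have hd1 : d ≠ 1 := by
    rintro rfl
    simp at hd
  have hcard : ({1, d, d⁻¹} : Finset G).card = 3 := by
    refine Finset.card_eq_three.2 ⟨1, d, d⁻¹, hd1.symm, by simpa [eq_comm] using hd1, ?_, rfl⟩
    intro h
    exact hd1 (by simpa using h.trans hdd.symm)
  refine indepNum_eq_of_forall_card_le ?_ fun s hs => hD.card_le_six_of_isIndepSet hs
  obtain ⟨s, hs, hcard'⟩ := hD.exists_isIndepSet_card_eq_two_mul (d := d) (T := {1, d, d⁻¹}) (by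
    simp only [Finset.mem_insert, Finset.mem_singleton, forall_eq_or_imp, forall_eq]
    simp [hdd, hdd', h1, hsq, hsq'])
  exact ⟨s, hs, by rw [hcard', hcard]⟩

lemma indepNum_derCayley_eq_four (hd1 : d ≠ 1) (hd : orderOf d ≠ 3) (hsq : ∃ a ∈ A, d = a ^ 2) :
    indepNum (derCayley x d) = 4 := by
  classical
  have h1 : ∃ a ∈ A, (1 : G) = a ^ 2 := ⟨1, one_mem A, (one_pow 2).symm⟩
  have hsq' : ∃ a ∈ A, d⁻¹ = a ^ 2 := by
    obtain ⟨e, he, rfl⟩ := hsq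
    exact ⟨e⁻¹, inv_mem he, (inv_pow e 2).symm⟩
  refine indepNum_eq_of_forall_card_le ?_ fun s hs => hD.card_le_four_of_isIndepSet hd hs
  obtain ⟨s, hs, hcard⟩ := hD.exists_isIndepSet_card_eq_two_mul (d := d) (T := {1, d}) (by
    simp only [Finset.mem_insert, Finset.mem_singleton, forall_eq_or_imp, forall_eq]
    simp [h1, hsq, hsq'])
  exact ⟨s, hs, by rw [hcard, Finset.card_pair hd1.symm]⟩

lemma indepNum_derCayley_eq_two (hsq : ¬∃ a ∈ A, d = a ^ 2) : indepNum (derCayley x d) = 2 := by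
  refine indepNum_eq_of_forall_card_le ?_ fun s hs => hD.card_le_two_of_isIndepSet hsq hs
  obtain ⟨s, hs, hcard⟩ := hD.exists_isIndepSet_card_eq_two_mul (d := d) (T := {1})
    (by simpa using ⟨1, one_mem A, (one_pow 2).symm⟩)
  exact ⟨s, hs, by rw [hcard, Finset.card_singleton]⟩

end IsGenDihedral

theorem stmt_10_general {G : Type*} [Group G]
    (A : Subgroup G) (hcomm : ∀ a ∈ A, ∀ b ∈ A, a * b = b * a)
    (x : G) (hx2 : x ^ 2 = 1) (hxA : x ∉ A) (hindex : A.index = 2)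
    (hconj : ∀ a ∈ A, x * a * x = a⁻¹)
    (d : G) (hd : ({d, d⁻¹} : Set G) ⊆ derQ G (Subgroup.zpowers x)) :
    indepNum (cayley G (derQ G (Subgroup.zpowers x) \ {d, d⁻¹})) ∈ ({2, 4, 6} : Set ℕ) ∧
    (indepNum (cayley G (derQ G (Subgroup.zpowers x) \ {d, d⁻¹})) = 6 ↔
      d ∈ A ∧ orderOf d = 3) ∧
    (indepNum (cayley G (derQ G (Subgroup.zpowers x) \ {d, d⁻¹})) = 4 ↔
      orderOf d ≠ 3 ∧ ∃ a ∈ A, d = a ^ 2) := by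
  have hD : IsGenDihedral A x := ⟨hcomm, hx2, hxA, hindex, hconj⟩
  by_cases hsq : ∃ a ∈ A, d = a ^ 2
  · have hdA : d ∈ A := by
      obtain ⟨a, ha, rfl⟩ := hsq
      exact pow_mem ha 2
    by_cases hd3 : orderOf d = 3
    · rw [hD.indepNum_derCayley_eq_six hdA hd3]
      simp [hdA, hd3]
    · have hd1 : d ≠ 1 := fun h => one_notMem_derQ (h ▸ hd (Set.mem_insert d _))
      rw [hD.indepNum_derCayley_eq_four hd1 hd3 hsq]
      simp [hd3, hsq]
  · have hd3 : ¬(d ∈ A ∧ orderOf d = 3) := fun ⟨hdA, hd3⟩ =>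
      hsq (exists_sq_of_orderOf_eq_three hdA hd3)
    rw [hD.indepNum_derCayley_eq_two hsq]
    simp [hd3, hsq]

/-- Let `n` be even, `A` abelian of order `n`, and `G = D(A)` (presented
abstractly) acting on the left cosets of `H = ⟨x⟩`. For `D = {d, d⁻¹} ⊆ Der(G)`, the
independence number `α` of `Cay(G, Der(G) \ D)` lies in `{2, 4, 6}`; it is 6 iff
`d ∈ A` and `d` has order 3; it is 4 iff `d` does not have order 3 and `d = a²` for
some `a ∈ A`; and it is 2 otherwise. -/
theorem stmt_10 {G : Type*} [Group G] [Fintype G]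
    (A : Subgroup G) (hcomm : ∀ a ∈ A, ∀ b ∈ A, a * b = b * a)
    (hEven : Even (Nat.card A))
    (x : G) (hx2 : x ^ 2 = 1) (hxA : x ∉ A) (hindex : A.index = 2)
    (hconj : ∀ a ∈ A, x * a * x = a⁻¹)
    (d : G) (hd : ({d, d⁻¹} : Set G) ⊆ derQ G (Subgroup.zpowers x)) :
    indepNum (cayley G (derQ G (Subgroup.zpowers x) \ {d, d⁻¹})) ∈ ({2, 4, 6} : Set ℕ) ∧
    (indepNum (cayley G (derQ G (Subgroup.zpowers x) \ {d, d⁻¹})) = 6 ↔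
      d ∈ A ∧ orderOf d = 3) ∧
    (indepNum (cayley G (derQ G (Subgroup.zpowers x) \ {d, d⁻¹})) = 4 ↔
      orderOf d ≠ 3 ∧ ∃ a ∈ A, d = a ^ 2) :=
  stmt_10_general A hcomm x hx2 hxA hindex hconj d hd
end

section
/- Let n be even, let A be an abelian group of order n, and consider the permutations of the n left cosets of H = ⟨x⟩ induced by the elements of G = D(A). Every derangement lying in the coset xA induces a permutation whose parity (sign) equals the parity of the permutation consisting of n/2 disjoint transpositions, i.e., its sign is (−1)^{n/2}. Furthermore, if A is cyclic of order n, then every element of xA whose induced permutation has sign (−1)^{n/2} is a derangement. -/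
/-- Sign of an involution. -/
lemma aux_sign_invol {α : Type*} [Fintype α] [DecidableEq α] (σ : Equiv.Perm α)
    (h : σ ^ 2 = 1) : ∃ k, σ.support.card = 2 * k ∧ Equiv.Perm.sign σ = (-1) ^ k := by
  have hord : orderOf σ ∣ 2 := orderOf_dvd_of_pow_eq_one h
  have hall : ∀ n ∈ σ.cycleType, n = 2 := by
    intro n hn
    have h1 : 2 ≤ n := Equiv.Perm.two_le_of_mem_cycleType hn
    have h2 : n ∣ 2 := (Multiset.dvd_lcm hn).trans (σ.lcm_cycleType ▸ hord)
    exact le_antisymm (Nat.le_of_dvd two_pos h2) h1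
  have hrep : σ.cycleType = Multiset.replicate (Multiset.card σ.cycleType) 2 :=
    Multiset.eq_replicate_card.mpr hall
  have hsum : σ.cycleType.sum = Multiset.card σ.cycleType * 2 := by
    have := congrArg Multiset.sum hrep
    rwa [Multiset.sum_replicate, smul_eq_mul] at this
  refine ⟨Multiset.card σ.cycleType, ?_, ?_⟩
  · rw [← σ.sum_cycleType, hsum, mul_comm]
  · rw [Equiv.Perm.sign_of_cycleType, hsum]
    rw [show Multiset.card σ.cycleType * 2 + Multiset.card σ.cycleType
        = 2 * Multiset.card σ.cycleType + Multiset.card σ.cycleType by ring]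
    rw [pow_add, pow_mul]
    norm_num

/-- In a finite cyclic group of even order, an element with a square root has
exactly two square roots. -/
lemma aux_sqrt_count {B : Type*} [CommGroup B] [Fintype B] [IsCyclic B]
    (hE : Even (Fintype.card B)) (c b0 : B) (hb0 : b0 * b0 = c) :
    Nat.card {b : B // b * b = c} = 2 := by
  classical
  have e : {b : B // b * b = c} ≃ {t : B // t * t = 1} :=
    { toFun := fun b => ⟨b0⁻¹ * b.1, by
        rw [mul_mul_mul_comm, ← mul_inv, hb0, b.2, inv_mul_cancel]⟩
      invFun := fun t => ⟨b0 * t.1, by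
        rw [mul_mul_mul_comm, hb0, t.2, mul_one]⟩
      left_inv := fun b => by simp
      right_inv := fun t => by simp }
  rw [Nat.card_congr e, Nat.card_eq_fintype_card, Fintype.card_subtype]
  have hle : (Finset.univ.filter fun t : B => t * t = 1).card ≤ 2 := by
    have := IsCyclic.card_pow_eq_one_le (α := B) (n := 2) two_pos
    simpa [pow_two] using this
  have h2 : (2 : ℕ) ∣ Fintype.card B := hE.two_dvd
  obtain ⟨g, hg⟩ := exists_prime_orderOf_dvd_card 2 h2
  have hg1 : g ≠ 1 := by
    intro h; rw [h, orderOf_one] at hg; norm_num at hg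
  have hgsq : g * g = 1 := by
    have := pow_orderOf_eq_one g; rwa [hg, pow_two] at this
  have hge : ({1, g} : Finset B) ⊆ Finset.univ.filter fun t : B => t * t = 1 := by
    intro t ht
    simp only [Finset.mem_insert, Finset.mem_singleton] at ht
    rcases ht with rfl | rfl <;> simp [hgsq]
  have hcard2 : ({1, g} : Finset B).card = 2 := by
    rw [Finset.card_insert_of_notMem (by simpa using hg1.symm)]; simp
  have := Finset.card_le_card hge
  omega

/-- Let `n` be even, `A` abelian of order `n`, and `G = D(A)` (presented
abstractly) acting on the `n` left cosets of `H = ⟨x⟩`. Every derangement in the coset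
`xA` induces a permutation of the cosets of sign `(−1)^{n/2}`; and if `A` is cyclic,
every element of `xA` inducing a permutation of sign `(−1)^{n/2}` is a derangement. -/
theorem stmt_11 {G : Type*} [Group G] [Fintype G]
    (A : Subgroup G) (hcomm : ∀ a ∈ A, ∀ b ∈ A, a * b = b * a)
    (hEven : Even (Nat.card A))
    (x : G) (hx2 : x ^ 2 = 1) (hxA : x ∉ A) (hindex : A.index = 2)
    (hconj : ∀ a ∈ A, x * a * x = a⁻¹)
    [Fintype (G ⧸ Subgroup.zpowers x)] [DecidableEq (G ⧸ Subgroup.zpowers x)] :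
    (∀ z : G, x⁻¹ * z ∈ A → z ∈ derQ G (Subgroup.zpowers x) →
      Equiv.Perm.sign (MulAction.toPermHom G (G ⧸ Subgroup.zpowers x) z) =
        (-1) ^ (Nat.card A / 2)) ∧
    (IsCyclic ↥A →
      ∀ z : G, x⁻¹ * z ∈ A →
        Equiv.Perm.sign (MulAction.toPermHom G (G ⧸ Subgroup.zpowers x) z) =
          (-1) ^ (Nat.card A / 2) →
        z ∈ derQ G (Subgroup.zpowers x)) := by
  classical
  set n : ℕ := Nat.card A with hn
  have hx1 : x ≠ 1 := fun h => hxA (h ▸ A.one_mem)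
  have hxx : x * x = 1 := by rwa [← pow_two]
  have hxinv : x⁻¹ = x := inv_eq_of_mul_eq_one_left hxx
  have hx2' : x ^ (2 : ℤ) = 1 := by
    rw [show (2 : ℤ) = ((2 : ℕ) : ℤ) from rfl, zpow_natCast, hx2]
  have hmemH : ∀ h : G, h ∈ Subgroup.zpowers x → h = 1 ∨ h = x := by
    rintro h ⟨k, rfl⟩
    rcases Int.even_or_odd k with ⟨m, hm⟩ | ⟨m, hm⟩
    · left
      show x ^ k = 1
      rw [hm, ← two_mul, zpow_mul, hx2', one_zpow]
    · right
      show x ^ k = x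
      rw [hm, zpow_add, zpow_mul, hx2', one_zpow, one_mul, zpow_one]
  haveI : Fact (Nat.Prime 2) := ⟨Nat.prime_two⟩
  have horder : orderOf x = 2 := orderOf_eq_prime hx2 hx1
  have hcardH : Nat.card (Subgroup.zpowers x) = 2 := by rw [Nat.card_zpowers, horder]
  have hcardG : Nat.card G = n * 2 := by
    rw [← A.card_mul_index, hindex, hn]
  have hHindex : (Subgroup.zpowers x).index = n := by
    have := (Subgroup.zpowers x).card_mul_index
    rw [hcardH, hcardG] at this
    omega
  have hm : Fintype.card (G ⧸ Subgroup.zpowers x) = n := by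
    rw [← Nat.card_eq_fintype_card, ← hHindex]
    rfl
  have hnpos : 0 < n := Nat.card_pos
  have hn2 : 2 ≤ n := by
    rcases hEven with ⟨t, ht⟩
    omega
  -- key facts about elements of the coset xA
  have key : ∀ a : G, a ∈ A → ((x * a) ^ 2 = 1) ∧
      (∀ b : ↥A, (((x * a * b : G) : G ⧸ Subgroup.zpowers x) = ((b : G) : G ⧸ Subgroup.zpowers x)) ↔ (b : G) * b = a⁻¹) := by
    intro a haA
    have hz2 : (x * a) ^ 2 = 1 := by
      rw [pow_two, show x * a * (x * a) = (x * a * x) * a by group, hconj a haA,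
        inv_mul_cancel]
    refine ⟨hz2, fun b => ?_⟩
    have hxb2 : x * (b : G) = (b : G)⁻¹ * x := by
      calc x * (b : G) = x * (b : G) * (x * x) := by rw [hxx, mul_one]
        _ = (x * (b : G) * x) * x := by group
        _ = (b : G)⁻¹ * x := by rw [hconj _ b.2]
    have heq : (x * a * (b : G))⁻¹ * (b : G) = x ↔ (b : G) * b = a⁻¹ := by
      calc (x * a * (b : G))⁻¹ * (b : G) = x
          ↔ (b : G) = x * a * (b : G) * x := inv_mul_eq_iff_eq_mul
        _ ↔ x * (b : G) = x * (x * a * (b : G) * x) := (mul_right_inj x).symm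
        _ ↔ x * (b : G) = a * ((b : G) * x) := by
            rw [show x * (x * a * (b : G) * x) = (x * x) * (a * ((b : G) * x)) by group,
              hxx, one_mul]
        _ ↔ (b : G)⁻¹ * x = a * ((b : G) * x) := by rw [hxb2]
        _ ↔ (b : G)⁻¹ * x = (a * (b : G)) * x := by rw [mul_assoc]
        _ ↔ (b : G)⁻¹ = a * (b : G) := mul_left_inj x
        _ ↔ a * (b : G) = (b : G)⁻¹ := eq_comm
        _ ↔ a = (b : G)⁻¹ * (b : G)⁻¹ := eq_mul_inv_iff_mul_eq.symm
        _ ↔ a = ((b : G) * (b : G))⁻¹ := by rw [mul_inv_rev]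
        _ ↔ ((b : G) * (b : G))⁻¹ = a := eq_comm
        _ ↔ (b : G) * (b : G) = a⁻¹ := inv_eq_iff_eq_inv
    rw [QuotientGroup.eq]
    constructor
    · intro hmem
      rcases hmemH _ hmem with h1 | h1
      · exfalso
        have h2 : x * a * (b : G) = (b : G) := inv_mul_eq_one.mp h1
        have h3 : x * a = 1 := by
          have : (x * a) * (b : G) = 1 * (b : G) := by rw [one_mul]; exact h2
          exact mul_right_cancel this
        exact hxA ((eq_inv_of_mul_eq_one_left h3) ▸ inv_mem haA)
      · exact heq.mp h1
    · intro hbb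
      rw [heq.mpr hbb]
      exact Subgroup.mem_zpowers x
  constructor
  · -- derangements in xA have sign (-1)^(n/2)
    intro z ha hder
    have K := key (x⁻¹ * z) ha
    rw [mul_inv_cancel_left] at K
    set σ : Equiv.Perm (G ⧸ Subgroup.zpowers x) := MulAction.toPermHom G (G ⧸ Subgroup.zpowers x) z with hσ
    have hσ2 : σ ^ 2 = 1 := by
      rw [hσ, ← map_pow, K.1, map_one]
    obtain ⟨k, hk1, hk2⟩ := aux_sign_invol σ hσ2
    have hsupp : σ.support = Finset.univ := by
      rw [Finset.eq_univ_iff_forall]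
      intro c
      rw [Equiv.Perm.mem_support]
      exact fun hc => hder c hc
    rw [hsupp, Finset.card_univ, hm] at hk1
    have hnk : n / 2 = k := by omega
    rw [hnk]
    exact hk2
  · -- converse for cyclic A
    intro hcyc z ha hsign
    have K := key (x⁻¹ * z) ha
    rw [mul_inv_cancel_left] at K
    obtain ⟨hz2, hfix⟩ := K
    set σ : Equiv.Perm (G ⧸ Subgroup.zpowers x) := MulAction.toPermHom G (G ⧸ Subgroup.zpowers x) z with hσ
    have hσ2 : σ ^ 2 = 1 := by
      rw [hσ, ← map_pow, hz2, map_one]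
    by_contra hder
    simp only [derQ, Set.mem_setOf_eq, not_forall, not_not] at hder
    obtain ⟨c, hc⟩ := hder
    letI : Fintype ↥A := Fintype.ofFinite _
    have hcardA : Fintype.card ↥A = n := by rw [← Nat.card_eq_fintype_card]
    let f : ↥A → G ⧸ Subgroup.zpowers x := fun b => ((b : G) : G ⧸ Subgroup.zpowers x)
    have hinj : Function.Injective f := by
      intro b₁ b₂ hbe
      have hmem := QuotientGroup.eq.mp hbe
      rcases hmemH _ hmem with h1 | h1
      · exact Subtype.ext (inv_mul_eq_one.mp h1)
      · exfalso
        apply hxA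
        rw [← h1]
        exact mul_mem (inv_mem b₁.2) b₂.2
    have hbij : Function.Bijective f :=
      (Fintype.bijective_iff_injective_and_card f).mpr ⟨hinj, by rw [hcardA, hm]⟩
    obtain ⟨b0, hb0⟩ := hbij.2 c
    have hb0fix : σ (f b0) = f b0 := by rw [hb0]; exact hc
    have hb0sq : (b0 : G) * b0 = (x⁻¹ * z)⁻¹ := (hfix b0).mp hb0fix
    letI cg : CommGroup ↥A :=
      { (inferInstance : Group ↥A) with
        mul_comm := fun p q => Subtype.ext (hcomm _ p.2 _ q.2) }
    have hcount : (Finset.univ.filter fun c : G ⧸ Subgroup.zpowers x => σ c = c).card = 2 := by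
      have e1 : {b : ↥A // σ (f b) = f b} ≃ {c : G ⧸ Subgroup.zpowers x // σ c = c} :=
        (Equiv.ofBijective f hbij).subtypeEquiv (fun b => Iff.rfl)
      have e2 : {b : ↥A // σ (f b) = f b} ≃
          {b : ↥A // b * b = (⟨(x⁻¹ * z)⁻¹, inv_mem ha⟩ : ↥A)} :=
        Equiv.subtypeEquivRight (fun b => by
          rw [show (σ (f b) = f b) ↔ ((b : G) * b = (x⁻¹ * z)⁻¹) from hfix b]
          exact ⟨fun h => Subtype.ext h, fun h => Subtype.ext_iff.mp h⟩)
      calc (Finset.univ.filter fun c : G ⧸ Subgroup.zpowers x => σ c = c).card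
          = Fintype.card {c : G ⧸ Subgroup.zpowers x // σ c = c} := (Fintype.card_subtype _).symm
        _ = Nat.card {c : G ⧸ Subgroup.zpowers x // σ c = c} := (Nat.card_eq_fintype_card).symm
        _ = Nat.card {b : ↥A // b * b = (⟨(x⁻¹ * z)⁻¹, inv_mem ha⟩ : ↥A)} :=
            Nat.card_congr (e1.symm.trans e2)
        _ = 2 := aux_sqrt_count (by rw [hcardA]; exact hEven) _ b0 (Subtype.ext hb0sq)
    have hsplit := Finset.card_filter_add_card_filter_not
      (s := Finset.univ) (p := fun c : G ⧸ Subgroup.zpowers x => σ c = c)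
    have hsupp_eq : (Finset.univ.filter fun c : G ⧸ Subgroup.zpowers x => ¬ σ c = c) = σ.support := by
      ext c; simp [Equiv.Perm.mem_support]
    rw [hsupp_eq, hcount, Finset.card_univ, hm] at hsplit
    obtain ⟨k, hk1, hk2⟩ := aux_sign_invol σ hσ2
    rw [hk1] at hsplit
    have hk3 : n / 2 = k + 1 := by omega
    rw [hk3] at hsign
    rw [hk2] at hsign
    have : ((-1 : ℤˣ)) ^ k * (-1) = (-1) ^ k * 1 := by
      rw [mul_one, ← pow_succ]
      exact hsign.symm ▸ hsign
    have h11 : (-1 : ℤˣ) = 1 := mul_left_cancel this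
    exact absurd h11 (by decide)
end

section
/- Let n be even, let A be an abelian group of order n, and let G = D(A) act on the n left cosets of H = ⟨x⟩. If C is an inverse-closed set of derangements of G with A \ {1} ⊆ C ⊆ Der(G), then α(Cay(G, C)) = 2. -/
/-!
An independent set of `Cay(G, C)` meets each coset of `A` at most once, because two distinct
elements `g, h` of one coset have `g⁻¹h ∈ A \ {1} ⊆ C`; as `A` has index two, `α ≤ 2`.
Conversely `x` fixes the coset `H`, so `x ∉ C` and `{1, x}` is independent.
-/

theorem indepNum_eq_card_of_isIndepSet {V : Type*} {X : SimpleGraph V} {s : Finset V}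
    (hs : IsIndepSet X s) (hmax : ∀ t : Finset V, IsIndepSet X t → t.card ≤ s.card) :
    indepNum X = s.card := by
  have hbdd : ∀ k ∈ {k | ∃ t : Finset V, IsIndepSet X ↑t ∧ t.card = k}, k ≤ s.card := by
    rintro _ ⟨t, ht, rfl⟩
    exact hmax t ht
  exact le_antisymm (csSup_le ⟨_, s, hs, rfl⟩ hbdd) (le_csSup ⟨_, hbdd⟩ ⟨s, hs, rfl⟩)

theorem isIndepSet_pair {V : Type*} {X : SimpleGraph V} {a b : V} (h : ¬X.Adj a b) :
    IsIndepSet X {a, b} :=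
  Set.pairwise_pair.mpr fun _ => ⟨h, fun h' => h h'.symm⟩

theorem cayley_adj_iff {Γ : Type*} [Group Γ] {C : Set Γ} (hC : ∀ c ∈ C, c⁻¹ ∈ C) {g h : Γ} :
    (cayley Γ C).Adj g h ↔ g ≠ h ∧ g⁻¹ * h ∈ C :=
  ⟨fun ⟨hne, hgh, _⟩ => ⟨hne, hgh⟩, fun ⟨hne, hgh⟩ => ⟨hne, hgh, by simpa using hC _ hgh⟩⟩

theorem card_le_index_of_isIndepSet_cayley {Γ : Type*} [Group Γ] {C : Set Γ}
    (hC : ∀ c ∈ C, c⁻¹ ∈ C) (A : Subgroup Γ) [A.FiniteIndex] (hAC : ∀ a ∈ A, a ≠ 1 → a ∈ C)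
    {s : Finset Γ} (hs : IsIndepSet (cayley Γ C) s) : s.card ≤ A.index := by
  have := Fintype.ofFinite (Γ ⧸ A)
  have hinj : Set.InjOn (fun g : Γ => (g : Γ ⧸ A)) s := by
    intro g hg h hh hgh
    by_contra hne
    have hmem : g⁻¹ * h ∈ A := QuotientGroup.eq.mp hgh
    have hne1 : g⁻¹ * h ≠ 1 := fun h1 => hne (inv_mul_eq_one.mp h1)
    exact hs hg hh hne ((cayley_adj_iff hC).mpr ⟨hne, hAC _ hmem hne1⟩)
  calc s.card ≤ (Finset.univ : Finset (Γ ⧸ A)).card :=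
        Finset.card_le_card_of_injOn _ (fun _ _ => Finset.mem_coe.mpr (Finset.mem_univ _)) hinj
    _ = A.index := by rw [Finset.card_univ, ← Nat.card_eq_fintype_card, A.index_eq_card]

theorem notMem_derQ_of_mem {G : Type*} [Group G] {H : Subgroup G} {h : G} (hh : h ∈ H) :
    h ∉ derQ G H := fun hder =>
  hder (1 : G) (QuotientGroup.eq.mpr (by simpa using hh))

theorem stmt_13_general {G : Type*} [Group G]
    (A : Subgroup G)
    (x : G) (hxA : x ∉ A) (hindex : A.index = 2)
    (C : Set G) (hCinv : ∀ c ∈ C, c⁻¹ ∈ C)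
    (hC1 : ∀ a : G, a ∈ A → a ≠ 1 → a ∈ C)
    (hC2 : C ⊆ derQ G (Subgroup.zpowers x)) :
    indepNum (cayley G C) = 2 := by
  classical
  have hxC : x ∉ C := fun hx => notMem_derQ_of_mem (Subgroup.mem_zpowers x) (hC2 hx)
  have hx1 : (1 : G) ≠ x := fun h => hxA (h ▸ A.one_mem)
  have hpair : IsIndepSet (cayley G C) ↑({1, x} : Finset G) := by
    rw [Finset.coe_pair]
    exact isIndepSet_pair fun hadj => hxC (by simpa using ((cayley_adj_iff hCinv).mp hadj).2)
  have : A.FiniteIndex := ⟨by omega⟩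
  have hmax (t : Finset G) (ht : IsIndepSet (cayley G C) ↑t) :
      t.card ≤ ({1, x} : Finset G).card := by
    rw [Finset.card_pair hx1, ← hindex]
    exact card_le_index_of_isIndepSet_cayley hCinv A hC1 ht
  rw [indepNum_eq_card_of_isIndepSet hpair hmax, Finset.card_pair hx1]

/-- Let `n` be even, `A` abelian of order `n`, and `G = D(A)` (presented
abstractly) acting on the left cosets of `H = ⟨x⟩`. If `C` is an inverse-closed set of
derangements with `A \ {1} ⊆ C ⊆ Der(G)`, then `α(Cay(G, C)) = 2`. -/
theorem stmt_13 {G : Type*} [Group G] [Fintype G]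
    (A : Subgroup G) (hcomm : ∀ a ∈ A, ∀ b ∈ A, a * b = b * a)
    (hEven : Even (Nat.card A))
    (x : G) (hx2 : x ^ 2 = 1) (hxA : x ∉ A) (hindex : A.index = 2)
    (hconj : ∀ a ∈ A, x * a * x = a⁻¹)
    (C : Set G) (hCinv : ∀ c ∈ C, c⁻¹ ∈ C)
    (hC1 : ∀ a : G, a ∈ A → a ≠ 1 → a ∈ C)
    (hC2 : C ⊆ derQ G (Subgroup.zpowers x)) :
    indepNum (cayley G C) = 2 :=
  stmt_13_general A x hxA hindex C hCinv hC1 hC2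
end

section
/- Let n be even and let A be an abelian group of order n such that, in the degree-n action of G = D(A) on the cosets of H = ⟨x⟩, the subgroup A is not contained in Alt(n). Then there is no inverse-closed subset C ⊆ Der(G) with 2 < α(Cay(G, C)) < 4; in particular, no Cayley subgraph Cay(G, C) of the derangement graph has independence number 3. -/
/-!
`A` acts regularly on the cosets of `⟨x⟩`, so an odd element `a ∈ A` is an odd left translation
of `A`; hence `⟨a⟩` has odd index in `A`, the elements of order at most `2` of `A` lie in the
cyclic group `⟨a⟩`, and the squares `Q` of `A` have index at most `2`: a product of two
non-squares of `A` is a square.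

The conjugates `x t²` (`t ∈ A`) of `x` fix a coset, so they never lie in `C`, and all elements
outside `A` are involutions. If an independent triple `w, u, v` has `w⁻¹ u` conjugate to `x`,
then `u w⁻¹ v` extends it to an independent set of size `4`. Such a triple always exists:
`1, x, q` if some square `q ≠ 1` is not in `C`; otherwise the quotients of an independent
triple are non-squares, and the index-two property forces one of them into `x Q`.
-/

open Equiv Subgroup

section Sign

variable {B : Type*} [Group B] [Fintype B] [DecidableEq B]

theorem sign_mulRight_eq_one_of_even_index {H : Subgroup B} (hH : Even H.index) {h : B}
    (hh : h ∈ H) : Perm.sign (Equiv.mulRight h) = 1 := by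
  classical
  -- `Equiv.mulRight h` acts on each of the `H.index` left cosets of `H` as it acts on `H`
  let e : B ≃ (B ⧸ H) × H :=
    { toFun b :=
        (b, ⟨(b : B ⧸ H).out⁻¹ * b, QuotientGroup.eq.mp (QuotientGroup.out_eq' _)⟩)
      invFun p := p.1.out * p.2
      left_inv b := mul_inv_cancel_left _ _
      right_inv := fun ⟨q, k⟩ => by
        have hq : ((q.out * k : B) : B ⧸ H) = q := by
          rw [QuotientGroup.mk_mul_of_mem _ k.2, QuotientGroup.out_eq']
        ext
        · exact hq
        · simp only [hq, inv_mul_cancel_left] }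
  have he : ∀ b, e (Equiv.mulRight h b) =
      prodCongrRight (fun _ => Equiv.mulRight ⟨h, hh⟩) (e b) := by
    intro b
    have hb : ((b * h : B) : B ⧸ H) = b := QuotientGroup.mk_mul_of_mem b hh
    ext
    · exact hb
    · simp [e, hb, mul_assoc]
  obtain ⟨k, hk⟩ := hH
  rw [Perm.sign_eq_sign_of_equiv _ _ e he, Perm.sign_prodCongrRight, Finset.prod_const,
    Finset.card_univ, ← Nat.card_eq_fintype_card, ← index_eq_card, hk, ← two_mul, pow_mul,
    Int.units_sq, one_pow]

theorem sign_mulLeft_eq_one_of_even_index {H : Subgroup B} (hH : Even H.index) {h : B}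
    (hh : h ∈ H) : Perm.sign (Equiv.mulLeft h) = 1 := by
  rw [Perm.sign_eq_sign_of_equiv _ (Equiv.mulRight h⁻¹) (Equiv.inv B) (fun b => mul_inv_rev h b)]
  exact sign_mulRight_eq_one_of_even_index hH (inv_mem hh)

end Sign

theorem sign_toPermHom_eq_sign_mulLeft {G : Type*} [Group G] {A H : Subgroup G}
    [Fintype (G ⧸ H)] [DecidableEq (G ⧸ H)] [Fintype A] [DecidableEq A]
    (hA : Function.Bijective (fun a : A => (a : G ⧸ H))) (a : A) :
    Perm.sign (MulAction.toPermHom G (G ⧸ H) a) = Perm.sign (Equiv.mulLeft a) :=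
  (Perm.sign_eq_sign_of_equiv _ _ (Equiv.ofBijective _ hA) fun _ => rfl).symm

theorem index_square_dvd_two_of_odd_index_zpowers {B : Type*} [CommGroup B] [Finite B] {c : B}
    (hc : Odd (zpowers c).index) : (square B).index ∣ 2 := by
  have hsq : square B = (powMonoidHom 2 : B →* B).range := by
    ext b
    simp [IsSquare, pow_two, eq_comm]
  -- an element of order two outside `⟨c⟩` would have order two in `B ⧸ ⟨c⟩`, of odd order
  have hker : (powMonoidHom 2 : B →* B).ker ≤ zpowers c := by
    intro z hz
    by_contra hzc
    have h2 : orderOf (z : B ⧸ zpowers c) = 2 :=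
      orderOf_eq_prime
        (by rw [← QuotientGroup.mk_pow, show z ^ 2 = 1 from hz, QuotientGroup.mk_one])
        (by rwa [Ne, QuotientGroup.eq_one_iff])
    have := orderOf_dvd_natCard (z : B ⧸ zpowers c)
    rw [h2, ← index_eq_card] at this
    exact Nat.not_even_iff_odd.mpr hc (even_iff_two_dvd.mpr this)
  have := isCyclic_of_le hker
  rw [hsq, index_range, ← IsCyclic.exponent_eq_card]
  exact Monoid.exponent_dvd_of_forall_pow_eq_one fun z => Subtype.ext z.2

theorem Subgroup.mul_mem_of_index_dvd_two {G : Type*} [Group G] {H : Subgroup G}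
    (hH : H.index ∣ 2) {a b : G} (ha : a ∉ H) (hb : b ∉ H) : a * b ∈ H := by
  rcases (Nat.dvd_prime Nat.prime_two).mp hH with h | h
  · exact absurd (index_eq_one.mp h ▸ mem_top a) ha
  · exact (mul_mem_iff_of_index_two h).mpr (iff_of_false ha hb)

theorem isIndepSet_iff_simpleGraph_isIndepSet {V : Type*} (X : SimpleGraph V) (s : Set V) :
    IsIndepSet X s ↔ X.IsIndepSet s := Iff.rfl

theorem indepNum_eq_simpleGraph_indepNum {V : Type*} (X : SimpleGraph V) :
    indepNum X = X.indepNum := by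
  simp only [indepNum, SimpleGraph.indepNum, SimpleGraph.isNIndepSet_iff,
    isIndepSet_iff_simpleGraph_isIndepSet]

section Cayley

variable {G : Type*} [Group G] {C : Set G}

theorem cayley_not_adj_of_inv_mul_notMem {a b : G} (h : a⁻¹ * b ∉ C) :
    ¬ (cayley G C).Adj a b ∧ ¬ (cayley G C).Adj b a :=
  ⟨fun hab => h hab.2.1, fun hba => h hba.2.2⟩

theorem inv_mul_notMem_of_cayley_not_adj (hC : ∀ c ∈ C, c⁻¹ ∈ C) {a b : G} (hab : a ≠ b)
    (h : ¬ (cayley G C).Adj a b) : a⁻¹ * b ∉ C :=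
  fun hc => h ⟨hab, hc, by simpa using hC _ hc⟩

theorem notMem_derQ_of_isConj {H : Subgroup G} {x g : G} (hx : x ∈ H) (hg : IsConj x g) :
    g ∉ derQ G H := by
  obtain ⟨c, rfl⟩ := isConj_iff.mp hg
  intro hd
  apply hd (c : G ⧸ H)
  rw [MulAction.Quotient.smul_mk, smul_eq_mul, QuotientGroup.eq]
  simpa using inv_mem hx

theorem isIndepSet_cayley_insert {s : Set G} {z : G} (hs : IsIndepSet (cayley G C) s)
    (hz : ∀ b ∈ s, b⁻¹ * z ∉ C) : IsIndepSet (cayley G C) (insert z s) :=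
  Set.Pairwise.insert hs fun b hb _ => (cayley_not_adj_of_inv_mul_notMem (hz b hb)).symm

theorem four_le_indepNum_of_isConj [Finite G] {H : Subgroup G} (hCder : C ⊆ derQ G H) {x : G}
    (hxH : x ∈ H) (hx2 : x ^ 2 = 1) {w u v : G} (hwu : w ≠ u) (hwv : w ≠ v) (huv : u ≠ v)
    (hwvC : w⁻¹ * v ∉ C) (huvC : u⁻¹ * v ∉ C) (hconj : IsConj x (w⁻¹ * u)) :
    4 ≤ indepNum (cayley G C) := by
  classical
  obtain ⟨p, rfl⟩ : ∃ p, u = w * p := ⟨w⁻¹ * u, by group⟩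
  obtain ⟨q, rfl⟩ : ∃ q, v = w * q := ⟨w⁻¹ * v, by group⟩
  simp only [inv_mul_cancel_left] at hconj hwvC
  have notMem_C : ∀ {g}, IsConj x g → g ∉ C := fun hg hgC =>
    notMem_derQ_of_isConj hxH hg (hCder hgC)
  have hp : p⁻¹ = p := by
    have : 1 = p ^ 2 := by simpa [hx2] using hconj.pow 2
    exact inv_eq_of_mul_eq_one_right (by rw [← pow_two, this])
  have hpq : p⁻¹ * q ∉ C := by simpa [mul_assoc] using huvC
  -- the fourth vertex `w * p * q`: its quotient by `w * q` is `q⁻¹ * p * q`, conjugate to `x`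
  have hqpq : q⁻¹ * (p * q) ∉ C :=
    notMem_C (hconj.trans (isConj_iff.mpr ⟨q⁻¹, by simp [mul_assoc]⟩))
  have hcard : ({w * p * q, w * q, w * p, w} : Finset G).card = 4 := by
    have hp1 : p ≠ 1 := by simpa using hwu
    have hq1 : q ≠ 1 := by simpa using hwv
    have hpq' : p ≠ q := by simpa using huv
    have hpq1 : p * q ≠ 1 := fun h => hpq' (by rw [← mul_eq_one_iff_inv_eq.mp h, hp])
    rw [Finset.card_insert_of_notMem, Finset.card_insert_of_notMem, Finset.card_pair hwu.symm]
      <;> simp [mul_assoc, hp1, hq1, hpq1, hpq'.symm]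
  rw [indepNum_eq_simpleGraph_indepNum, ← hcard]
  refine SimpleGraph.IsIndepSet.card_le_indepNum ?_
  rw [← isIndepSet_iff_simpleGraph_isIndepSet]
  push_cast
  refine isIndepSet_cayley_insert (isIndepSet_cayley_insert
    (isIndepSet_cayley_insert (Set.pairwise_singleton _ _) ?_) ?_) ?_ <;>
    simp [mul_assoc, notMem_C hconj, hwvC, hpq, hp ▸ hpq, hqpq]

end Cayley

section GeneralizedDihedral

variable {G : Type*} [Group G] {A Q : Subgroup G} {x : G}

theorem isConj_mul_mul_self (hconj : ∀ a ∈ A, x * a * x = a⁻¹) (hx2 : x ^ 2 = 1) {t : G}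
    (ht : t ∈ A) : IsConj x (x * (t * t)) := by
  have hxx : x * x = 1 := by rw [← pow_two, hx2]
  refine isConj_iff.mpr ⟨t⁻¹, ?_⟩
  calc t⁻¹ * x * t⁻¹⁻¹ = x * t * x * x * t := by rw [inv_inv, ← hconj t ht]
    _ = x * (t * t) := by rw [mul_assoc (x * t), hxx, mul_one, mul_assoc]

theorem bijective_mk_zpowers (hxA : x ∉ A) (hA : A.index = 2) (hx2 : x ^ 2 = 1) :
    Function.Bijective (fun a : A => (a : G ⧸ zpowers x)) := by
  refine ⟨fun a b hab => ?_, fun q => ?_⟩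
  · obtain ⟨k, hk⟩ := mem_zpowers_iff.mp (QuotientGroup.eq.mp hab)
    rw [zpow_eq_zpow_emod' k hx2] at hk
    rcases Int.emod_two_eq_zero_or_one k with h | h <;> simp only [Nat.cast_ofNat, h] at hk
    · exact Subtype.ext (inv_mul_eq_one.mp (by simpa using hk.symm))
    · exact absurd (hk ▸ mul_mem (inv_mem a.2) b.2 : x ^ (1 : ℤ) ∈ A) (by simpa using hxA)
  · obtain ⟨g, rfl⟩ := QuotientGroup.mk_surjective q
    by_cases hg : g ∈ A
    · exact ⟨⟨g, hg⟩, rfl⟩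
    · exact ⟨⟨g * x, (mul_mem_iff_of_index_two hA).mpr (iff_of_false hg hxA)⟩,
        QuotientGroup.mk_mul_of_mem g (mem_zpowers x)⟩

theorem inv_mul_mem_or_mul_inv_mul_mem (hxA : x ∉ A) (hA : A.index = 2)
    (hconj : ∀ a ∈ A, x * a * x = a⁻¹) (hx2 : x ^ 2 = 1)
    (hQ : Q.relIndex A ∣ 2) {g h : G} (hg : g ∉ Q) (hxg : x * g ∉ Q) (hh : h ∉ Q)
    (hxh : x * h ∉ Q) : g⁻¹ * h ∈ Q ∨ x * (g⁻¹ * h) ∈ Q := by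
  have hxx : x * x = 1 := by rw [← pow_two, hx2]
  have hxmul : ∀ {g}, g ∉ A → x * g ∈ A := fun hg =>
    (mul_mem_iff_of_index_two hA).mpr (iff_of_false hxA hg)
  have hQmul : ∀ {a b}, a ∈ A → b ∈ A → a ∉ Q → b ∉ Q → a * b ∈ Q := fun ha hb haQ hbQ =>
    mul_mem_of_index_dvd_two (H := Q.subgroupOf A) (a := ⟨_, ha⟩) (b := ⟨_, hb⟩) hQ haQ hbQ
  by_cases hgA : g ∈ A <;> by_cases hhA : h ∈ A
  · exact .inl (hQmul (inv_mem hgA) hhA (fun h' => hg (by simpa using inv_mem h')) hh)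
  · refine .inr ?_
    have : x * g⁻¹ = g * x :=
      calc x * g⁻¹ = x * g⁻¹ * x * x := by rw [mul_assoc (x * g⁻¹), hxx, mul_one]
        _ = g * x := by rw [hconj _ (inv_mem hgA), inv_inv]
    rw [← mul_assoc, this, mul_assoc]
    exact hQmul hgA (hxmul hhA) hg hxh
  · refine .inr ?_
    have : g⁻¹ = g := by
      have := hconj _ (hxmul hgA)
      rw [← mul_assoc, hxx, one_mul, mul_inv_rev, inv_eq_of_mul_eq_one_right hxx] at this
      exact (mul_right_cancel this).symm
    rw [this, ← mul_assoc]
    exact hQmul (hxmul hgA) hhA hxg hh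
  · refine .inl ?_
    have : g⁻¹ * h = (x * g)⁻¹ * (x * h) := by group
    rw [this]
    exact hQmul (inv_mem (hxmul hgA)) (hxmul hhA) (fun h' => hxg (by simpa using inv_mem h')) hxh

theorem four_le_indepNum_of_two_lt [Finite G] (hxA : x ∉ A) (hA : A.index = 2)
    (hconj : ∀ a ∈ A, x * a * x = a⁻¹) (hx2 : x ^ 2 = 1)
    (hQsq : ∀ q ∈ Q, ∃ t ∈ A, t * t = q) (hQ : Q.relIndex A ∣ 2) {C : Set G}
    (hCder : C ⊆ derQ G (zpowers x)) (hC : ∀ c ∈ C, c⁻¹ ∈ C)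
    (h2 : 2 < indepNum (cayley G C)) : 4 ≤ indepNum (cayley G C) := by
  have hxH : x ∈ zpowers x := mem_zpowers x
  have hxx : x * x = 1 := by rw [← pow_two, hx2]
  have hQx : ∀ q ∈ Q, IsConj x (x * q) := fun q hq => by
    obtain ⟨t, ht, rfl⟩ := hQsq q hq
    exact isConj_mul_mul_self hconj hx2 ht
  by_cases hcase : ∃ q ∈ Q, q ≠ 1 ∧ q ∉ C
  · obtain ⟨q, hqQ, hq1, hqC⟩ := hcase
    have hxq : x ≠ q := fun h => by
      obtain ⟨t, ht, rfl⟩ := hQsq q hqQ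
      exact hxA (h ▸ mul_mem ht ht)
    refine four_le_indepNum_of_isConj hCder hxH hx2 (w := 1) (u := x) (v := q)
      (fun h => hxA (h ▸ one_mem A)) hq1.symm hxq (by simpa using hqC) ?_
      (by simpa using IsConj.refl x)
    rw [inv_eq_of_mul_eq_one_right hxx]
    exact fun hc => notMem_derQ_of_isConj hxH (hQx q hqQ) (hCder hc)
  · push Not at hcase
    obtain ⟨s, hs, hcard⟩ := (cayley G C).exists_isNIndepSet_indepNum
    rw [← indepNum_eq_simpleGraph_indepNum] at hcard
    obtain ⟨a, ha, b, hb, c, hc, hab, hac, hbc⟩ := Finset.two_lt_card.mp (hcard ▸ h2)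
    have hsC : ∀ g ∈ s, ∀ h ∈ s, g ≠ h → g⁻¹ * h ∉ C := fun g hg h hh hgh =>
      inv_mul_notMem_of_cayley_not_adj hC hgh (hs hg hh hgh)
    have hsQ : ∀ g ∈ s, ∀ h ∈ s, g ≠ h → g⁻¹ * h ∉ Q := fun g hg h hh hgh hQgh =>
      hsC g hg h hh hgh (hcase _ hQgh (by simpa [inv_mul_eq_one] using hgh))
    have quad : ∀ {w u v}, w ∈ s → u ∈ s → v ∈ s → w ≠ u → w ≠ v → u ≠ v →
        x * (w⁻¹ * u) ∈ Q → 4 ≤ indepNum (cayley G C) := fun hw hu hv hwu hwv huv hQwu =>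
      four_le_indepNum_of_isConj hCder hxH hx2 hwu hwv huv (hsC _ hw _ hv hwv)
        (hsC _ hu _ hv huv) (by simpa [← mul_assoc, hxx] using hQx _ hQwu)
    by_cases hb' : x * (a⁻¹ * b) ∈ Q
    · exact quad ha hb hc hab hac hbc hb'
    by_cases hc' : x * (a⁻¹ * c) ∈ Q
    · exact quad ha hc hb hac hab hbc.symm hc'
    obtain h | h := inv_mul_mem_or_mul_inv_mul_mem hxA hA hconj hx2 hQ (hsQ a ha b hb hab) hb'
      (hsQ a ha c hc hac) hc'
    · exact absurd (by simpa [mul_assoc] using h) (hsQ b hb c hc hbc)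
    · exact quad hb hc ha hbc hab.symm hac.symm (by simpa [mul_assoc] using h)

end GeneralizedDihedral

theorem stmt_15_general {G : Type*} [Group G] [Fintype G]
    (A : Subgroup G) (hcomm : ∀ a ∈ A, ∀ b ∈ A, a * b = b * a)
    (x : G) (hx2 : x ^ 2 = 1) (hxA : x ∉ A) (hindex : A.index = 2)
    (hconj : ∀ a ∈ A, x * a * x = a⁻¹)
    [Fintype (G ⧸ Subgroup.zpowers x)] [DecidableEq (G ⧸ Subgroup.zpowers x)]
    (hAodd : ∃ a ∈ A,
      Equiv.Perm.sign (MulAction.toPermHom G (G ⧸ Subgroup.zpowers x) a) = -1) :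
    ¬ ∃ C : Set G, C ⊆ derQ G (Subgroup.zpowers x) ∧ (∀ c ∈ C, c⁻¹ ∈ C) ∧
        2 < indepNum (cayley G C) ∧ indepNum (cayley G C) < 4 := by
  rintro ⟨C, hCder, hCinv, h2, h4⟩
  classical
  have : IsMulCommutative A := ⟨⟨fun a b => Subtype.ext (hcomm a a.2 b b.2)⟩⟩
  obtain ⟨a, ha, hsign⟩ := hAodd
  have hodd : Odd (zpowers (⟨a, ha⟩ : A)).index := by
    by_contra heven
    rw [sign_toPermHom_eq_sign_mulLeft (bijective_mk_zpowers hxA hindex hx2) ⟨a, ha⟩,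
      sign_mulLeft_eq_one_of_even_index (Nat.not_odd_iff_even.mp heven) (mem_zpowers _)] at hsign
    exact absurd hsign (by decide)
  open scoped IsMulCommutative in
  have hQ : ((square A).map A.subtype).relIndex A ∣ 2 := by
    rw [relIndex, ← comap_subtype, comap_map_eq_self_of_injective A.subtype_injective]
    exact index_square_dvd_two_of_odd_index_zpowers hodd
  refine h4.not_ge (four_le_indepNum_of_two_lt hxA hindex hconj hx2 ?_ hQ hCder hCinv h2)
  rintro _ ⟨t, ⟨r, rfl⟩, rfl⟩
  exact ⟨r, r.2, rfl⟩

/-- Let `n` be even, `A` abelian of order `n`, and `G = D(A)` (presented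
abstractly), acting on the `n` left cosets of `H = ⟨x⟩`; suppose the permutations of the
cosets induced by `A` include odd ones (`A ⊄ Alt(n)`). Then no inverse-closed
`C ⊆ Der(G)` gives `2 < α(Cay(G, C)) < 4`; in particular no Cayley subgraph of the
derangement graph has independence number 3. -/
theorem stmt_15 {G : Type*} [Group G] [Fintype G]
    (A : Subgroup G) (hcomm : ∀ a ∈ A, ∀ b ∈ A, a * b = b * a)
    (hEven : Even (Nat.card A))
    (x : G) (hx2 : x ^ 2 = 1) (hxA : x ∉ A) (hindex : A.index = 2)
    (hconj : ∀ a ∈ A, x * a * x = a⁻¹)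
    [Fintype (G ⧸ Subgroup.zpowers x)] [DecidableEq (G ⧸ Subgroup.zpowers x)]
    (hAodd : ∃ a ∈ A,
      Equiv.Perm.sign (MulAction.toPermHom G (G ⧸ Subgroup.zpowers x) a) = -1) :
    ¬ ∃ C : Set G, C ⊆ derQ G (Subgroup.zpowers x) ∧ (∀ c ∈ C, c⁻¹ ∈ C) ∧
        2 < indepNum (cayley G C) ∧ indepNum (cayley G C) < 4 :=
  stmt_15_general A hcomm x hx2 hxA hindex hconj hAodd
end

section
/- Let n be even and let A ≤ Sym(n) be a transitive abelian permutation group of order n with A ≤ Alt(n). Then at most |A|/4 elements of A are squares, i.e., |{a² : a ∈ A}| ≤ n/4. -/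
/-!
An abelian transitive permutation group `A` is regular: its non-identity elements are fixed-point
free. Hence each `σ ≠ 1` in `A`, of order `d`, is a product of `n / d` cycles of length `d`, of
sign `(-1) ^ (n + n / d)`. As `σ` and `n` are even, so is `n / d`, i.e. `d ∣ n / 2`.

The squares form the image of the squaring endomorphism of `A`, whose kernel is the `2`-torsion
`A[2]`, so it suffices that `|A[2]| ≥ 4`. Otherwise `|A[2]| ≤ 2` (it is a `2`-group), and then
`|A[2 ^ j]| ≤ 2 ^ j` for all `j`. But if `2 ^ k` is the `2`-part of `n`, a subgroup of order
`2 ^ k` lies in `A[2 ^ (k - 1)]`, because the exponent of `A` divides `n / 2`.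
-/

open Equiv Finset

namespace Equiv.Perm

variable {α : Type*}

theorem eq_one_of_mem_of_apply_eq_self {A : Subgroup (Perm α)}
    (hcomm : ∀ a ∈ A, ∀ b ∈ A, a * b = b * a)
    (htrans : ∀ i j : α, ∃ σ ∈ A, σ i = j)
    {σ : Perm α} (hσ : σ ∈ A) {x : α} (hx : σ x = x) : σ = 1 := by
  ext y
  obtain ⟨τ, hτ, rfl⟩ := htrans x y
  calc σ (τ x) = τ (σ x) := congrArg (· x) (hcomm σ hσ τ hτ)
    _ = τ x := by rw [hx]

variable [Fintype α] [DecidableEq α]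

theorem eq_orderOf_of_mem_cycleType {σ : Perm α}
    (hσ : ∀ (k : ℕ) (x : α), (σ ^ k) x = x → σ ^ k = 1) {c : ℕ}
    (hc : c ∈ σ.cycleType) : c = orderOf σ := by
  obtain ⟨γ, τ, rfl, hdisj, hγ, rfl⟩ := mem_cycleType_iff.mp hc
  obtain ⟨x, hx⟩ := hγ.nonempty_support
  have hτx : τ x = x := (hdisj x).resolve_left (mem_support.mp hx)
  have hfix : ((γ * τ) ^ #γ.support) x = x := by
    rw [hdisj.commute.mul_pow, ← hγ.orderOf, pow_orderOf_eq_one, one_mul,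
      pow_apply_eq_self_of_apply_eq_self hτx]
  exact Nat.dvd_antisymm (dvd_of_mem_cycleType hc) (orderOf_dvd_of_pow_eq_one (hσ _ x hfix))

theorem orderOf_dvd_card_div_two {σ : Perm α} (hsign : sign σ = 1)
    (hα : Even (Fintype.card α)) (hσ : ∀ (k : ℕ) (x : α), (σ ^ k) x = x → σ ^ k = 1) :
    orderOf σ ∣ Fintype.card α / 2 := by
  rcases eq_or_ne σ 1 with rfl | hne
  · simp
  have hfree (x : α) : σ x ≠ x := fun hx => hne (by simpa using hσ 1 x (by simpa using hx))
  have hsupp : #σ.support = Fintype.card α := by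
    rw [eq_univ_of_forall fun x => mem_support.mpr (hfree x), card_univ]
  set r := Multiset.card σ.cycleType
  have hsum : r * orderOf σ = Fintype.card α := by
    rw [← hsupp, ← sum_cycleType,
      Multiset.eq_replicate_card.mpr fun _ => eq_orderOf_of_mem_cycleType hσ,
      Multiset.sum_replicate, smul_eq_mul]
  obtain ⟨s, hs⟩ : Even r := by
    rw [sign_of_cycleType, sum_cycleType, hsupp, neg_one_pow_eq_one_iff_even (by decide)] at hsign
    exact (Nat.even_add.mp hsign).mp hα
  rw [← hsum, hs, ← two_mul, mul_assoc, Nat.mul_div_cancel_left _ two_pos]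
  exact dvd_mul_left _ _

theorem pow_card_div_two_eq_one_of_mem {A : Subgroup (Perm α)}
    (hcomm : ∀ a ∈ A, ∀ b ∈ A, a * b = b * a)
    (htrans : ∀ i j : α, ∃ σ ∈ A, σ i = j)
    (hAlt : A ≤ alternatingGroup α) (hα : Even (Fintype.card α)) {σ : Perm α}
    (hσ : σ ∈ A) :
    σ ^ (Fintype.card α / 2) = 1 :=
  orderOf_dvd_iff_pow_eq_one.mp <| orderOf_dvd_card_div_two (hAlt hσ) hα fun k _ hx =>
    eq_one_of_mem_of_apply_eq_self hcomm htrans (pow_mem hσ k) hx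

end Equiv.Perm

theorem MonoidHom.card_ker_comp_le {G H K : Type*} [Group G] [Group H] [Group K] [Finite G]
    [Finite H] (f : G →* H) (g : H →* K) :
    Nat.card (g.comp f).ker ≤ Nat.card g.ker * Nat.card f.ker := by
  set φ := f.domRestrict (g.comp f).ker
  rw [← φ.ker.card_mul_index, Subgroup.index_ker, mul_comm]
  gcongr
  · rw [MonoidHom.domRestrict_range]
    exact Subgroup.card_le_of_le (Subgroup.map_le_iff_le_comap.mpr fun x hx => hx)
  · rw [MonoidHom.ker_domRestrict]
    exact (Nat.card_congr (Subgroup.subgroupOfEquivOfLe (f.ker_le_comap g.ker)).toEquiv).le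

section TwoTorsion

variable {G : Type*} [CommGroup G] [Finite G]

theorem card_ker_powMonoidHom_two_pow_le (j : ℕ) :
    Nat.card (powMonoidHom (2 ^ j) : G →* G).ker ≤
      Nat.card (powMonoidHom 2 : G →* G).ker ^ j := by
  induction j with
  | zero => simp
  | succ j ih =>
    have hcomp : (powMonoidHom (2 ^ (j + 1)) : G →* G) =
        (powMonoidHom (2 ^ j)).comp (powMonoidHom 2) := by
      ext x
      simp [pow_succ', pow_mul]
    rw [hcomp, pow_succ]
    exact (MonoidHom.card_ker_comp_le _ _).trans (Nat.mul_le_mul_right _ ih)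

theorem four_le_card_ker_powMonoidHom_two (heven : Even (Nat.card G))
    (hexp : ∀ g : G, g ^ (Nat.card G / 2) = 1) :
    4 ≤ Nat.card (powMonoidHom 2 : G →* G).ker := by
  obtain ⟨k, m, hm, hcard⟩ := Nat.exists_eq_two_pow_mul_odd (Nat.card_pos (α := G)).ne'
  obtain ⟨k, rfl⟩ : ∃ l, k = l + 1 := Nat.exists_eq_add_one.mpr <| Nat.pos_of_ne_zero <| by
    rintro rfl
    rw [hcard, pow_zero, one_mul] at heven
    exact Nat.not_even_iff_odd.mpr hm heven
  obtain ⟨P, hP⟩ := Sylow.exists_subgroup_card_pow_prime 2 (Dvd.intro m hcard.symm)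
  have hPle : P ≤ (powMonoidHom (2 ^ k) : G →* G).ker := by
    intro g hg
    have hpow : g ^ 2 ^ (k + 1) = 1 :=
      hP ▸ orderOf_dvd_iff_pow_eq_one.mp (Subgroup.orderOf_dvd_natCard P hg)
    have hhalf : g ^ (2 ^ k * m) = 1 := by
      rw [← hexp g, hcard, pow_succ, mul_right_comm, Nat.mul_div_cancel _ two_pos]
    have hgcd : (2 ^ (k + 1)).gcd (2 ^ k * m) = 2 ^ k := by
      rw [pow_succ, Nat.gcd_mul_left, Nat.coprime_two_left.mpr hm, mul_one]
    rw [MonoidHom.mem_ker, powMonoidHom_apply, ← hgcd]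
    exact pow_gcd_eq_one.mpr ⟨hpow, hhalf⟩
  obtain ⟨t, ht⟩ := (IsPGroup.iff_card (p := 2) (G := (powMonoidHom 2 : G →* G).ker)).mp
    fun g => ⟨1, Subtype.ext (by simpa using MonoidHom.mem_ker.mp g.2)⟩
  by_contra! hlt
  have htwo : Nat.card (powMonoidHom 2 : G →* G).ker ≤ 2 := by
    rw [ht] at hlt ⊢
    have : t < 2 := (Nat.pow_lt_pow_iff_right (by norm_num)).mp hlt
    interval_cases t <;> simp
  have := calc 2 ^ (k + 1) = Nat.card P := hP.symm
    _ ≤ Nat.card (powMonoidHom (2 ^ k) : G →* G).ker := Subgroup.card_le_of_le hPle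
    _ ≤ Nat.card (powMonoidHom 2 : G →* G).ker ^ k := card_ker_powMonoidHom_two_pow_le k
    _ ≤ 2 ^ k := Nat.pow_le_pow_left htwo k
  rw [pow_succ] at this
  have := Nat.two_pow_pos k
  omega

end TwoTorsion

/-- Let `n` be even and `A ≤ Sym(n)` a transitive abelian permutation group
of order `n` contained in `Alt(n)`. Then at most `|A|/4` elements of `A` are squares. -/
theorem stmt_16 {n : ℕ} (hn : Even n) (A : Subgroup (Equiv.Perm (Fin n)))
    (hcomm : ∀ a ∈ A, ∀ b ∈ A, a * b = b * a)
    (htrans : ∀ i j : Fin n, ∃ σ ∈ A, σ i = j)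
    (hcard : Nat.card A = n)
    (hAlt : A ≤ alternatingGroup (Fin n)) :
    4 * {b : Equiv.Perm (Fin n) | ∃ a ∈ A, a ^ 2 = b}.ncard ≤ Nat.card A := by
  let _ : CommGroup A := { mul_comm := fun a b => Subtype.ext (hcomm a a.2 b b.2) }
  have hexp (a : A) : a ^ (Nat.card A / 2) = 1 := by
    have := Perm.pow_card_div_two_eq_one_of_mem hcomm htrans hAlt (by simpa using hn) a.2
    rw [hcard]
    exact Subtype.ext (by simpa using this)
  have hsq : {b | ∃ a ∈ A, a ^ 2 = b} =
      Subtype.val '' ((powMonoidHom 2 : A →* A).range : Set A) := by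
    ext b
    constructor
    · rintro ⟨a, ha, rfl⟩
      exact ⟨⟨a, ha⟩ ^ 2, ⟨⟨a, ha⟩, rfl⟩, rfl⟩
    · rintro ⟨_, ⟨a, rfl⟩, rfl⟩
      exact ⟨a, a.2, rfl⟩
  rw [hsq, Set.ncard_image_of_injective _ Subtype.val_injective, ← Nat.card_coe_set_eq,
    ← (powMonoidHom 2 : A →* A).ker.card_mul_index, Subgroup.index_ker, SetLike.coe_sort_coe]
  exact Nat.mul_le_mul_right _ (four_le_card_ker_powMonoidHom_two (by rwa [hcard]) hexp)
end

section
/- Let G ≤ Sym(n) be a transitive permutation group and let H ≤ G also be transitive. If H has the EKR property (i.e., α(Γ_H) = |H|/n), then G has the EKR property (i.e., α(Γ_G) = |G|/n). -/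
section IndependenceNumber

variable {V : Type*} [Finite V] {X : SimpleGraph V}

lemma indepNum_bddAbove (X : SimpleGraph V) :
    BddAbove {k | ∃ s : Finset V, IsIndepSet X ↑s ∧ s.card = k} :=
  ⟨Nat.card V, fun _ ⟨s, _, hs⟩ => hs ▸ Set.ncard_coe_finset s ▸ Set.ncard_le_card _⟩

lemma IsIndepSet.ncard_le_indepNum {s : Set V} (hs : IsIndepSet X s) : s.ncard ≤ indepNum X :=
  le_csSup (indepNum_bddAbove X)
    ⟨s.toFinite.toFinset, by simpa using hs, (Set.ncard_eq_toFinset_card s).symm⟩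

lemma exists_isIndepSet_card_eq_indepNum (X : SimpleGraph V) :
    ∃ s : Finset V, IsIndepSet X ↑s ∧ s.card = indepNum X :=
  Nat.sSup_mem (s := {k | ∃ s : Finset V, IsIndepSet X ↑s ∧ s.card = k})
    ⟨0, ∅, by simp [IsIndepSet], Finset.card_empty⟩ (indepNum_bddAbove X)

end IndependenceNumber

section Cayley

variable {Γ K : Type*} [Group Γ] [Group K] {C : Set Γ} {C' : Set K} {f : K →* Γ}

lemma IsIndepSet.preimage_mul_cayley {s : Set Γ} (hs : IsIndepSet (cayley Γ C) s)
    (hf : Function.Injective f) (hC : ∀ k ∈ C', f k ∈ C) (g : Γ) :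
    IsIndepSet (cayley K C') ((g * f ·) ⁻¹' s) := by
  rintro a ha b hb hab ⟨-, hab', hba'⟩
  refine hs ha hb (by simpa using hf.ne hab) ⟨by simpa using hf.ne hab, ?_, ?_⟩
  · simpa [mul_assoc] using hC _ hab'
  · simpa [mul_assoc] using hC _ hba'

theorem indepNum_cayley_le_index_mul [Finite Γ] [Finite K] (hf : Function.Injective f)
    (hC : ∀ k ∈ C', f k ∈ C) :
    indepNum (cayley Γ C) ≤ f.range.index * indepNum (cayley K C') := by
  classical
  obtain ⟨s, hs, hcard⟩ := exists_isIndepSet_card_eq_indepNum (cayley Γ C)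
  set π : Γ → Γ ⧸ f.range := QuotientGroup.mk
  have hfiber : ∀ q ∈ s.image π, {x ∈ s | π x = q}.card ≤ indepNum (cayley K C') := by
    simp only [Finset.mem_image]
    rintro _ ⟨g, -, rfl⟩
    have hsub : ↑({x ∈ s | π x = π g} : Finset Γ) ⊆ (g * f ·) '' ((g * f ·) ⁻¹' s) := by
      intro x hx
      obtain ⟨hxs, hx⟩ := Finset.mem_filter.mp hx
      obtain ⟨k, hk⟩ := QuotientGroup.eq.mp hx.symm
      exact ⟨k, by simpa [hk] using hxs, by simp [hk]⟩
    calc {x ∈ s | π x = π g}.card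
        = (↑({x ∈ s | π x = π g} : Finset Γ) : Set Γ).ncard := (Set.ncard_coe_finset _).symm
      _ ≤ ((g * f ·) '' ((g * f ·) ⁻¹' s)).ncard := Set.ncard_le_ncard hsub
      _ ≤ ((g * f ·) ⁻¹' s).ncard := Set.ncard_image_le (Set.toFinite _)
      _ ≤ indepNum (cayley K C') := (hs.preimage_mul_cayley hf hC g).ncard_le_indepNum
  calc indepNum (cayley Γ C) = s.card := hcard.symm
    _ ≤ indepNum (cayley K C') * (s.image π).card := Finset.card_le_mul_card_image s _ hfiber
    _ ≤ indepNum (cayley K C') * f.range.index := by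
      gcongr
      exact Set.ncard_coe_finset _ ▸ Set.ncard_le_card _
    _ = f.range.index * indepNum (cayley K C') := mul_comm _ _

end Cayley

lemma MulAction.card_div_card_le_card_stabilizer (G : Type*) {α : Type*} [Group G]
    [MulAction G α] [Finite α] (a : α) :
    Nat.card G / Nat.card α ≤ Nat.card (stabilizer G a) := by
  apply Nat.div_le_of_le_mul
  calc Nat.card G = Nat.card (stabilizer G a) * (orbit G a).ncard := by
        rw [← index_stabilizer, Subgroup.card_mul_index]
    _ ≤ Nat.card (stabilizer G a) * Nat.card α := by gcongr; exact Set.ncard_le_card _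
    _ = Nat.card α * Nat.card (stabilizer G a) := mul_comm _ _

lemma isIndepSet_cayley_der_stabilizer {n : ℕ} (G : Subgroup (Equiv.Perm (Fin n))) (i : Fin n) :
    IsIndepSet (cayley G (der G)) (MulAction.stabilizer G i : Set G) :=
  fun _ ha _ hb _ hadj => hadj.2.1 i ((MulAction.stabilizer G i).mul_mem (inv_mem ha) hb)

lemma card_div_le_indepNum_cayley_der {n : ℕ} (G : Subgroup (Equiv.Perm (Fin n))) :
    Nat.card G / n ≤ indepNum (cayley G (der G)) := by
  cases n with
  | zero => simp
  | succ m =>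
    calc Nat.card G / (m + 1) = Nat.card G / Nat.card (Fin (m + 1)) := by rw [Nat.card_fin]
      _ ≤ Nat.card (MulAction.stabilizer G (0 : Fin (m + 1))) :=
        MulAction.card_div_card_le_card_stabilizer G 0
      _ = (MulAction.stabilizer G (0 : Fin (m + 1)) : Set G).ncard := (Nat.card_coe_set_eq _).symm
      _ ≤ indepNum (cayley G (der G)) := (isIndepSet_cayley_der_stabilizer G 0).ncard_le_indepNum

theorem stmt_18_general {n : ℕ} (G H : Subgroup (Equiv.Perm (Fin n))) (hHG : H ≤ G)
    (hEKR : indepNum (cayley H (der H)) = Nat.card H / n) :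
    indepNum (cayley G (der G)) = Nat.card G / n := by
  set f := Subgroup.inclusion hHG
  have hf : Function.Injective f := Subgroup.inclusion_injective hHG
  have hcard : f.range.index * Nat.card H = Nat.card G := by
    rw [Nat.card_congr (MonoidHom.ofInjective hf).toEquiv, mul_comm, Subgroup.card_mul_index]
  refine le_antisymm ?_ (card_div_le_indepNum_cayley_der G)
  calc indepNum (cayley G (der G)) ≤ f.range.index * indepNum (cayley H (der H)) :=
        indepNum_cayley_le_index_mul hf fun _ hk => hk
    _ = f.range.index * (Nat.card H / n) := by rw [hEKR]
    _ ≤ Nat.card G / n := hcard ▸ Nat.mul_div_le_mul_div_assoc _ _ _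

/-- Let `H ≤ G ≤ Sym(n)` both be transitive. If `H` has the EKR property
(`α(Γ_H) = |H|/n`), then so does `G` (`α(Γ_G) = |G|/n`). -/
theorem stmt_18 {n : ℕ} (G H : Subgroup (Equiv.Perm (Fin n))) (hHG : H ≤ G)
    (hGtrans : ∀ i j : Fin n, ∃ σ ∈ G, σ i = j)
    (hHtrans : ∀ i j : Fin n, ∃ σ ∈ H, σ i = j)
    (hEKR : indepNum (cayley H (der H)) = Nat.card H / n) :
    indepNum (cayley G (der G)) = Nat.card G / n :=
  stmt_18_general G H hHG hEKR
end
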